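/- arXiv:2112.03614 — 10 statements merged into one kernel-verified Lean document; each statement's English description precedes it below -/
import Mathlib

section
/- Let α be a unit-speed curve with nowhere-vanishing curvature and let X(s,u) be its surface of osculating circles. Then the cross product of the partial derivatives satisfies X_s × X_u = r(1 - cos u)(-rτ sin u · T + rτ cos u · N + r' · B). Consequently X(s,u) is a non-regular point if and only if cos u = 1 or r'(s) = τ(s) = 0. -/
open Real

noncomputable section

/-- Euclidean dot product on ℝ³. -/
def dot3 (a b : Fin 3 → ℝ) : ℝ := a 0 * b 0 + a 1 * b 1 + a 2 * b 2

/-- Cross product on ℝ³. -/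
def cross3 (a b : Fin 3 → ℝ) : Fin 3 → ℝ :=
  ![a 1 * b 2 - a 2 * b 1, a 2 * b 0 - a 0 * b 2, a 0 * b 1 - a 1 * b 0]

/-- Euclidean norm on ℝ³. -/
def norm3 (a : Fin 3 → ℝ) : ℝ := Real.sqrt (dot3 a a)

/-- Scalar triple product: determinant of the three vectors. -/
def det3 (a b c : Fin 3 → ℝ) : ℝ := dot3 a (cross3 b c)

lemma cross_comb (t n : Fin 3 → ℝ) (htt : dot3 t t = 1) (hnn : dot3 n n = 1)
    (htn : dot3 t n = 0) (a1 a2 a3 b1 b2 : ℝ) :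
    cross3 (a1 • t + a2 • n + a3 • cross3 t n) (b1 • t + b2 • n)
      = (-(a3*b2)) • t + (a3*b1) • n + (a1*b2 - a2*b1) • cross3 t n := by
  simp only [dot3] at htt hnn htn
  funext i
  fin_cases i <;> simp [cross3]
  · linear_combination (a3*b1*(n 0))*htt - (a3*b2*(t 0))*hnn + (a3*b2*(n 0) - a3*b1*(t 0))*htn
  · linear_combination (a3*b1*(n 1))*htt - (a3*b2*(t 1))*hnn + (a3*b2*(n 1) - a3*b1*(t 1))*htn
  · linear_combination (a3*b1*(n 2))*htt - (a3*b2*(t 2))*hnn + (a3*b2*(n 2) - a3*b1*(t 2))*htn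

lemma coeff_zero (t n : Fin 3 → ℝ) (htt : dot3 t t = 1) (hnn : dot3 n n = 1)
    (htn : dot3 t n = 0) (p q w : ℝ)
    (h : p • t + q • n + w • cross3 t n = 0) : p = 0 ∧ q = 0 ∧ w = 0 := by
  simp only [dot3] at htt hnn htn
  have h0 := congrFun h 0
  have h1 := congrFun h 1
  have h2 := congrFun h 2
  simp only [cross3, Pi.add_apply, Pi.smul_apply, smul_eq_mul, Pi.zero_apply,
    Matrix.cons_val_zero, Matrix.cons_val_one, Matrix.head_cons,
    Matrix.cons_val_two, Matrix.tail_cons, Fin.isValue] at h0 h1 h2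
  refine ⟨?_, ?_, ?_⟩
  · linear_combination (t 0) * h0 + (t 1) * h1 + (t 2) * h2 - p * htt - q * htn
  · linear_combination (n 0) * h0 + (n 1) * h1 + (n 2) * h2 - q * hnn - p * htn
  · linear_combination (t 1 * n 2 - t 2 * n 1) * h0 + (t 2 * n 0 - t 0 * n 2) * h1
      + (t 0 * n 1 - t 1 * n 0) * h2 - w * (n 0 * n 0 + n 1 * n 1 + n 2 * n 2) * htt
      - w * hnn + w * (t 0 * n 0 + t 1 * n 1 + t 2 * n 2) * htn

/-- Formula for `X_s × X_u` and characterization of non-regular points. -/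
theorem stmt_1
    (α T N B : ℝ → Fin 3 → ℝ) (κ τ r r' : ℝ → ℝ)
    (hκ : ∀ s, 0 < κ s)
    (hr : ∀ s, r s = (κ s)⁻¹)
    -- Frenet frame and Frenet equations
    (hTT : ∀ s, dot3 (T s) (T s) = 1)
    (hNN : ∀ s, dot3 (N s) (N s) = 1)
    (hTN : ∀ s, dot3 (T s) (N s) = 0)
    (hB : ∀ s, B s = cross3 (T s) (N s))
    (hα : ∀ s, HasDerivAt α (T s) s)
    (hT : ∀ s, HasDerivAt T (κ s • N s) s)
    (hN : ∀ s, HasDerivAt N ((-κ s) • T s + τ s • B s) s)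
    (hB' : ∀ s, HasDerivAt B ((-τ s) • N s) s)
    (hr' : ∀ s, HasDerivAt r (r' s) s)
    -- the surface of osculating circles and its partial derivatives
    (X Xs Xu : ℝ → ℝ → Fin 3 → ℝ)
    (hX : ∀ s u, X s u = α s + r s • (Real.sin u • T s + (1 - Real.cos u) • N s))
    (hXs : ∀ s u, HasDerivAt (fun t => X t u) (Xs s u) s)
    (hXu : ∀ s u, HasDerivAt (fun w => X s w) (Xu s u) u)
    :
    ∀ s u,
      cross3 (Xs s u) (Xu s u) =
        (r s * (1 - Real.cos u)) •
          ((-(r s * τ s * Real.sin u)) • T s + (r s * τ s * Real.cos u) • N s + r' s • B s)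
      ∧ (cross3 (Xs s u) (Xu s u) = 0 ↔ Real.cos u = 1 ∨ (r' s = 0 ∧ τ s = 0)) := by
  intro s u
  have hκ0 : κ s ≠ 0 := (hκ s).ne'
  have hrpos : 0 < r s := by rw [hr]; exact inv_pos.mpr (hκ s)
  have hrk : r s * κ s = 1 := by rw [hr]; field_simp
  -- derivative in s
  have dXs : HasDerivAt (fun t' => X t' u)
      (T s + (r s • (Real.sin u • (κ s • N s) + (1 - Real.cos u) • ((-κ s) • T s + τ s • B s))
        + r' s • (Real.sin u • T s + (1 - Real.cos u) • N s))) s := by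
    have he : (fun t' => X t' u)
        = fun t' => α t' + r t' • (Real.sin u • T t' + (1 - Real.cos u) • N t') :=
      funext fun t' => hX t' u
    rw [he]
    exact (hα s).add ((hr' s).smul (((hT s).const_smul (Real.sin u)).add
      ((hN s).const_smul (1 - Real.cos u))))
  have keyS : Xs s u = _ := (hXs s u).unique dXs
  have hXs' : Xs s u = (Real.cos u + r' s * Real.sin u) • T s
      + (r' s * (1 - Real.cos u) + Real.sin u) • N s
      + (r s * τ s * (1 - Real.cos u)) • cross3 (T s) (N s) := by
    rw [keyS, hB]
    funext i
    simp only [Pi.add_apply, Pi.smul_apply, smul_eq_mul, Pi.neg_apply]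
    linear_combination ((Real.cos u - 1) * T s i + Real.sin u * N s i) * hrk
  -- derivative in u
  have dXu : HasDerivAt (fun w => X s w)
      (0 + r s • ((Real.cos u • T s) + ((0 - -Real.sin u) • N s))) u := by
    have he : (fun w => X s w)
        = fun w => α s + r s • (Real.sin w • T s + (1 - Real.cos w) • N s) :=
      funext fun w => hX s w
    rw [he]
    exact (hasDerivAt_const u (α s)).add
      ((((Real.hasDerivAt_sin u).smul_const (T s)).add
        (((hasDerivAt_const u (1:ℝ)).sub (Real.hasDerivAt_cos u)).smul_const (N s))).const_smul (r s))
  have keyU : Xu s u = _ := (hXu s u).unique dXu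
  have hXu' : Xu s u = (r s * Real.cos u) • T s + (r s * Real.sin u) • N s := by
    rw [keyU]
    funext i
    simp only [Pi.add_apply, Pi.smul_apply, smul_eq_mul, Pi.zero_apply]
    ring
  -- main formula
  have hcross : cross3 (Xs s u) (Xu s u) =
      (r s * (1 - Real.cos u)) •
        ((-(r s * τ s * Real.sin u)) • T s + (r s * τ s * Real.cos u) • N s + r' s • B s) := by
    rw [hXs', hXu', cross_comb (T s) (N s) (hTT s) (hNN s) (hTN s), hB]
    funext i
    simp only [Pi.add_apply, Pi.smul_apply, smul_eq_mul]
    linear_combination (r s * r' s * cross3 (T s) (N s) i) * Real.sin_sq_add_cos_sq u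
  refine ⟨hcross, ?_⟩
  constructor
  · intro h
    rw [hcross] at h
    rcases smul_eq_zero.mp h with hc | hV
    · left
      have : 1 - Real.cos u = 0 := by
        rcases mul_eq_zero.mp hc with h' | h'
        · exact absurd h' hrpos.ne'
        · exact h'
      linarith
    · rw [hB] at hV
      obtain ⟨h1, h2, h3⟩ := coeff_zero (T s) (N s) (hTT s) (hNN s) (hTN s) _ _ _ hV
      right
      refine ⟨h3, ?_⟩
      have hrτ : r s * τ s = 0 := by
        nlinarith [Real.sin_sq_add_cos_sq u, sq_nonneg (r s * τ s)]
      rcases mul_eq_zero.mp hrτ with h' | h'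
      · exact absurd h' hrpos.ne'
      · exact h'
  · intro h
    rw [hcross]
    rcases h with h | ⟨h1, h2⟩
    · rw [h]
      simp
    · rw [h1, h2]
      simp
end
end

section
/- Let α be a unit-speed curve with nowhere-vanishing curvature, β(s) = α(s) + r(s)N(s) the locus of centers of osculating circles, and Σ(x; s) = |x - β(s)|² - r(s)² the one-parameter family of spheres. The surface of osculating circles X(s,u) satisfies the envelope condition (d/ds)Σ(X(s,u); s) = 0 for all u (with cos u ≠ 1) if and only if r'(s) = 0. Hence the surface of osculating circles is a canal surface if and only if the curvature κ = 1/r of the generator is constant. -/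
open Real

noncomputable section

lemma dot3_comb (T N B : Fin 3 → ℝ) (hNN : dot3 N N = 1)
    (hTN : dot3 T N = 0) (hTB : dot3 T B = 0) (hNB : dot3 N B = 0)
    (a b c d : ℝ) :
    dot3 (a • T + b • N) (c • N + d • B) = b * c := by
  simp only [dot3, Pi.add_apply, Pi.smul_apply, smul_eq_mul] at *
  linear_combination (a*c)*hTN + (a*d)*hTB + (b*c)*hNN + (b*d)*hNB

lemma dot3_self_cross (T N : Fin 3 → ℝ) : dot3 T (cross3 T N) = 0 := by
  simp [dot3, cross3]; ring

lemma dot3_right_cross (T N : Fin 3 → ℝ) : dot3 N (cross3 T N) = 0 := by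
  simp [dot3, cross3]; ring

/-- The surface of osculating circles satisfies the envelope
(canal-surface) condition for the family of spheres centered at `β = α + r N` of radius `r`
if and only if `r' = 0`, i.e. iff the curvature of the generator is constant. -/
theorem stmt_4
    (α T N B : ℝ → Fin 3 → ℝ) (κ τ r r' : ℝ → ℝ)
    (hκ : ∀ s, 0 < κ s)
    (hr : ∀ s, r s = (κ s)⁻¹)
    -- Frenet frame and Frenet equations
    (hTT : ∀ s, dot3 (T s) (T s) = 1)
    (hNN : ∀ s, dot3 (N s) (N s) = 1)
    (hTN : ∀ s, dot3 (T s) (N s) = 0)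
    (hB : ∀ s, B s = cross3 (T s) (N s))
    (hα : ∀ s, HasDerivAt α (T s) s)
    (hT : ∀ s, HasDerivAt T (κ s • N s) s)
    (hN : ∀ s, HasDerivAt N ((-κ s) • T s + τ s • B s) s)
    (hB' : ∀ s, HasDerivAt B ((-τ s) • N s) s)
    (hr' : ∀ s, HasDerivAt r (r' s) s)
    -- the surface of osculating circles and its partial derivatives
    (X Xs Xu : ℝ → ℝ → Fin 3 → ℝ)
    (hX : ∀ s u, X s u = α s + r s • (Real.sin u • T s + (1 - Real.cos u) • N s))
    (hXs : ∀ s u, HasDerivAt (fun t => X t u) (Xs s u) s)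
    (hXu : ∀ s u, HasDerivAt (fun w => X s w) (Xu s u) u)
    (β β' : ℝ → Fin 3 → ℝ)
    (hβ : ∀ s, β s = α s + r s • N s)
    (hβ' : ∀ s, HasDerivAt β (β' s) s) :
    (∀ s, ((∀ u, Real.cos u ≠ 1 →
        dot3 (X s u - β s) (β' s) + r s * r' s = 0) ↔ r' s = 0))
    ∧ ((∀ s u, Real.cos u ≠ 1 →
        dot3 (X s u - β s) (β' s) + r s * r' s = 0) ↔ ∀ s₁ s₂, κ s₁ = κ s₂) := by
  have hκne : ∀ s, κ s ≠ 0 := fun s => ne_of_gt (hκ s)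
  have hrκ : ∀ s, r s * κ s = 1 := fun s => by
    rw [hr]; exact inv_mul_cancel₀ (hκne s)
  have hrpos : ∀ s, 0 < r s := fun s => by
    rw [hr]; exact inv_pos.mpr (hκ s)
  -- β' formula
  have hβ'2 : ∀ s, β' s = r' s • N s + (r s * τ s) • B s := by
    intro s
    have hderiv : HasDerivAt (fun t => α t + r t • N t)
        (T s + (r s • ((-κ s) • T s + τ s • B s) + r' s • N s)) s :=
      (hα s).add ((hr' s).smul (hN s))
    have hβeq : β = fun t => α t + r t • N t := funext hβ
    have hβ'val : β' s = T s + (r s • ((-κ s) • T s + τ s • B s) + r' s • N s) :=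
      (hβ' s).unique (by rw [hβeq]; exact hderiv)
    rw [hβ'val]
    funext i
    simp only [Pi.add_apply, Pi.smul_apply, smul_eq_mul, Pi.neg_apply]
    linear_combination (-(T s i)) * hrκ s
  -- X - β
  have hXβ : ∀ s u, X s u - β s
      = (r s * Real.sin u) • T s + (-(r s * Real.cos u)) • N s := by
    intro s u
    rw [hX, hβ]
    funext i
    simp only [Pi.add_apply, Pi.sub_apply, Pi.smul_apply, smul_eq_mul]
    ring
  -- key identity
  have key : ∀ s u, dot3 (X s u - β s) (β' s) + r s * r' s
      = r s * r' s * (1 - Real.cos u) := by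
    intro s u
    rw [hXβ, hβ'2]
    rw [dot3_comb (T s) (N s) (B s) (hNN s) (hTN s)
      (by rw [hB]; exact dot3_self_cross _ _)
      (by rw [hB]; exact dot3_right_cross _ _)]
    ring
  have part1 : ∀ s, ((∀ u, Real.cos u ≠ 1 →
      dot3 (X s u - β s) (β' s) + r s * r' s = 0) ↔ r' s = 0) := by
    intro s
    constructor
    · intro h
      have hπ := h π (by rw [Real.cos_pi]; norm_num)
      rw [key s π, Real.cos_pi] at hπ
      have hrr : r s * r' s = 0 := by nlinarith
      rcases mul_eq_zero.mp hrr with h0 | h0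
      · exact absurd h0 (ne_of_gt (hrpos s))
      · exact h0
    · intro h u _
      rw [key s u, h]; ring
  refine ⟨part1, ?_, ?_⟩
  · intro h s₁ s₂
    have hz : ∀ s, r' s = 0 := fun s => (part1 s).mp (h s)
    have hrc : r s₁ = r s₂ :=
      is_const_of_deriv_eq_zero (fun s => (hr' s).differentiableAt)
        (fun s => by rw [(hr' s).deriv, hz]) s₁ s₂
    rw [hr, hr] at hrc
    exact inv_injective hrc
  · intro hk s u _
    have hrc : r = fun _ => r 0 := funext fun t => by rw [hr, hr, hk t 0]
    have hc : HasDerivAt r 0 s := by rw [hrc]; exact hasDerivAt_const _ _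
    have hz : r' s = 0 := (hr' s).unique hc
    rw [key s u, hz]; ring
end
end

section
/- Let X(s,u) be the surface of osculating circles of a unit-speed curve α with curvature κ = 1/r and torsion τ. At regular points, the unit normal of the surface is 𝐍(s,u) = (r²τ² + r'²)^{-1/2} (-rτ sin u · T + rτ cos u · N + r' · B). -/
/-
Differentiating with the Frenet equations (and rκ = 1) gives
X_s = (cos u + r' sin u) T + (sin u + r' (1 - cos u)) N + rτ (1 - cos u) B and
X_u = r cos u T + r sin u N. In the positively oriented orthonormal frame (T, N, B) the cross
product is computed on coordinates, and the identity sin² u + cos² u = 1 collapses it to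
X_s × X_u = r (1 - cos u) V with V = -rτ sin u T + rτ cos u N + r' B. The scalar r (1 - cos u)
is positive at regular points and |V|² = r²τ² + r'², so normalizing gives the claim.
-/

open Real

noncomputable section

open scoped Matrix

lemma cross3_eq_crossProduct (a b : Fin 3 → ℝ) : cross3 a b = a ⨯₃ b := rfl

lemma dot3_eq_dotProduct (a b : Fin 3 → ℝ) : dot3 a b = a ⬝ᵥ b := by
  rw [dot3, Matrix.vec3_dotProduct]

lemma norm3_smul_of_nonneg {k : ℝ} (hk : 0 ≤ k) (v : Fin 3 → ℝ) :
    norm3 (k • v) = k * norm3 v := by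
  rw [norm3, norm3, dot3_eq_dotProduct, dot3_eq_dotProduct, smul_dotProduct, dotProduct_smul,
    smul_eq_mul, smul_eq_mul, ← mul_assoc, ← sq, sqrt_mul (sq_nonneg k), sqrt_sq hk]

lemma inv_norm3_smul_smul_of_pos {k : ℝ} (hk : 0 < k) (v : Fin 3 → ℝ) :
    (norm3 (k • v))⁻¹ • (k • v) = (norm3 v)⁻¹ • v := by
  rw [norm3_smul_of_nonneg hk.le, smul_smul, mul_inv_rev, inv_mul_cancel_right₀ hk.ne']

section OrthonormalFrame

variable {R : Type*} [CommRing R] {T N : Fin 3 → R}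

lemma cross_orthonormal_frame (hTT : T ⬝ᵥ T = 1) (hNN : N ⬝ᵥ N = 1) (hTN : T ⬝ᵥ N = 0)
    (a b c d e f : R) :
    (a • T + b • N + c • T ⨯₃ N) ⨯₃ (d • T + e • N + f • T ⨯₃ N) =
      (b * f - c * e) • T + (c * d - a * f) • N + (a * e - b * d) • T ⨯₃ N := by
  have hBN : T ⨯₃ N ⨯₃ N = -T := by
    rw [cross_cross_eq_smul_sub_smul, hNN, hTN, one_smul, zero_smul, zero_sub]
  have hTB : T ⨯₃ (T ⨯₃ N) = -N := by
    rw [cross_cross_eq_smul_sub_smul', hTN, hTT, one_smul, zero_smul, zero_sub]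
  have hBT : T ⨯₃ N ⨯₃ T = N := by rw [← cross_anticomm, hTB, neg_neg]
  have hNB : N ⨯₃ (T ⨯₃ N) = T := by rw [← cross_anticomm, hBN, neg_neg]
  simp only [map_add, map_smul, LinearMap.add_apply, LinearMap.smul_apply, cross_self,
    ← cross_anticomm T N, hBN, hTB, hBT, hNB]
  module

lemma dotProduct_self_orthonormal_frame (hTT : T ⬝ᵥ T = 1) (hNN : N ⬝ᵥ N = 1)
    (hTN : T ⬝ᵥ N = 0) (a b c : R) :
    (a • T + b • N + c • T ⨯₃ N) ⬝ᵥ (a • T + b • N + c • T ⨯₃ N) = a ^ 2 + b ^ 2 + c ^ 2 := by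
  have hBB : T ⨯₃ N ⬝ᵥ T ⨯₃ N = 1 := by
    rw [cross_dot_cross, hTT, hNN, hTN, dotProduct_comm, hTN]; ring
  have hBT : T ⨯₃ N ⬝ᵥ T = 0 := by rw [dotProduct_comm, dot_self_cross]
  have hBN : T ⨯₃ N ⬝ᵥ N = 0 := by rw [dotProduct_comm, dot_cross_self]
  simp only [add_dotProduct, dotProduct_add, smul_dotProduct, dotProduct_smul, smul_eq_mul,
    dot_self_cross, dot_cross_self, hTT, hNN, hBB, hTN, dotProduct_comm N T, hBT, hBN]
  ring

end OrthonormalFrame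

def osculatingCircleSurface (α T N : ℝ → Fin 3 → ℝ) (r : ℝ → ℝ) (s u : ℝ) : Fin 3 → ℝ :=
  α s + r s • (sin u • T s + (1 - cos u) • N s)

section OsculatingCircleSurface

variable {α T N : ℝ → Fin 3 → ℝ} {r : ℝ → ℝ} {s : ℝ}

lemma hasDerivAt_osculatingCircleSurface_fst {B : Fin 3 → ℝ} {κ τ r' : ℝ}
    (hα : HasDerivAt α (T s) s) (hT : HasDerivAt T (κ • N s) s)
    (hN : HasDerivAt N ((-κ) • T s + τ • B) s) (hr : HasDerivAt r r' s) (hrκ : r s * κ = 1)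
    (u : ℝ) :
    HasDerivAt (fun t => osculatingCircleSurface α T N r t u)
      ((cos u + r' * sin u) • T s + (sin u + r' * (1 - cos u)) • N s +
        (r s * τ * (1 - cos u)) • B) s := by
  refine (hα.add (hr.smul ((hT.const_smul (sin u)).add (hN.const_smul (1 - cos u)))))
    |>.congr_deriv ?_
  rw [Pi.add_apply, Pi.smul_apply, Pi.smul_apply]
  linear_combination (norm := module) hrκ • (sin u • N s - (1 - cos u) • T s)

lemma hasDerivAt_osculatingCircleSurface_snd (u : ℝ) :
    HasDerivAt (fun w => osculatingCircleSurface α T N r s w)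
      ((r s * cos u) • T s + (r s * sin u) • N s) u := by
  have hcos : HasDerivAt (fun w => 1 - cos w) (sin u) u := by
    simpa using (hasDerivAt_cos u).const_sub 1
  refine (((hasDerivAt_sin u).smul_const (T s)).add (hcos.smul_const (N s))).const_smul (r s)
    |>.const_add (α s) |>.congr_deriv ?_
  module

end OsculatingCircleSurface

theorem stmt_5_general
    (α T N B : ℝ → Fin 3 → ℝ) (κ τ r r' : ℝ → ℝ)
    (hκ : ∀ s, 0 < κ s)
    (hr : ∀ s, r s = (κ s)⁻¹)
    -- Frenet frame and Frenet equations
    (hTT : ∀ s, dot3 (T s) (T s) = 1)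
    (hNN : ∀ s, dot3 (N s) (N s) = 1)
    (hTN : ∀ s, dot3 (T s) (N s) = 0)
    (hB : ∀ s, B s = cross3 (T s) (N s))
    (hα : ∀ s, HasDerivAt α (T s) s)
    (hT : ∀ s, HasDerivAt T (κ s • N s) s)
    (hN : ∀ s, HasDerivAt N ((-κ s) • T s + τ s • B s) s)
    (hr' : ∀ s, HasDerivAt r (r' s) s)
    -- the surface of osculating circles and its partial derivatives
    (X Xs Xu : ℝ → ℝ → Fin 3 → ℝ)
    (hX : ∀ s u, X s u = α s + r s • (Real.sin u • T s + (1 - Real.cos u) • N s))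
    (hXs : ∀ s u, HasDerivAt (fun t => X t u) (Xs s u) s)
    (hXu : ∀ s u, HasDerivAt (fun w => X s w) (Xu s u) u)
    :
    ∀ s u, Real.cos u ≠ 1 → ¬(r' s = 0 ∧ τ s = 0) →
      (norm3 (cross3 (Xs s u) (Xu s u)))⁻¹ • cross3 (Xs s u) (Xu s u) =
        (Real.sqrt ((r s) ^ 2 * (τ s) ^ 2 + (r' s) ^ 2))⁻¹ •
          ((-(r s * τ s * Real.sin u)) • T s + (r s * τ s * Real.cos u) • N s
            + r' s • B s) := by
  intro s u hcu _
  obtain rfl : X = osculatingCircleSurface α T N r := funext₂ hX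
  have hrκ : r s * κ s = 1 := by rw [hr, inv_mul_cancel₀ (hκ s).ne']
  have hXs_eq := (hXs s u).unique
    (hasDerivAt_osculatingCircleSurface_fst (hα s) (hT s) (hN s) (hr' s) hrκ u)
  have hXu_eq := (hXu s u).unique (hasDerivAt_osculatingCircleSurface_snd u)
  simp only [dot3_eq_dotProduct] at hTT hNN hTN
  set V := (-(r s * τ s * sin u)) • T s + (r s * τ s * cos u) • N s + r' s • B s with hV
  have hscale : 0 < r s * (1 - cos u) :=
    mul_pos (by rw [hr]; exact inv_pos.mpr (hκ s)) (sub_pos.mpr ((cos_le_one u).lt_of_ne hcu))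
  have hcross : cross3 (Xs s u) (Xu s u) = (r s * (1 - cos u)) • V := by
    simp only [hXs_eq, hXu_eq, hV, hB, cross3_eq_crossProduct]
    -- give `X_u` a zero `B`-component so that the frame formula applies
    rw [← add_zero ((r s * cos u) • T s + (r s * sin u) • N s), ← zero_smul ℝ (T s ⨯₃ N s),
      cross_orthonormal_frame (hTT s) (hNN s) (hTN s)]
    linear_combination (norm := module) (r s * r' s * sin_sq_add_cos_sq u) • T s ⨯₃ N s
  have hnorm : norm3 V = √(r s ^ 2 * τ s ^ 2 + r' s ^ 2) := by
    rw [norm3, dot3_eq_dotProduct, hV, hB, cross3_eq_crossProduct,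
      dotProduct_self_orthonormal_frame (hTT s) (hNN s) (hTN s)]
    congr 1
    linear_combination (r s * τ s) ^ 2 * sin_sq_add_cos_sq u
  rw [hcross, inv_norm3_smul_smul_of_pos hscale, hnorm]

/-- At regular points the unit normal of the surface of osculating
circles is `(r²τ² + r'²)^{-1/2} (-rτ sin u · T + rτ cos u · N + r' · B)`. -/
theorem stmt_5
    (α T N B : ℝ → Fin 3 → ℝ) (κ τ r r' : ℝ → ℝ)
    (hκ : ∀ s, 0 < κ s)
    (hr : ∀ s, r s = (κ s)⁻¹)
    -- Frenet frame and Frenet equations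
    (hTT : ∀ s, dot3 (T s) (T s) = 1)
    (hNN : ∀ s, dot3 (N s) (N s) = 1)
    (hTN : ∀ s, dot3 (T s) (N s) = 0)
    (hB : ∀ s, B s = cross3 (T s) (N s))
    (hα : ∀ s, HasDerivAt α (T s) s)
    (hT : ∀ s, HasDerivAt T (κ s • N s) s)
    (hN : ∀ s, HasDerivAt N ((-κ s) • T s + τ s • B s) s)
    (hB' : ∀ s, HasDerivAt B ((-τ s) • N s) s)
    (hr' : ∀ s, HasDerivAt r (r' s) s)
    -- the surface of osculating circles and its partial derivatives
    (X Xs Xu : ℝ → ℝ → Fin 3 → ℝ)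
    (hX : ∀ s u, X s u = α s + r s • (Real.sin u • T s + (1 - Real.cos u) • N s))
    (hXs : ∀ s u, HasDerivAt (fun t => X t u) (Xs s u) s)
    (hXu : ∀ s u, HasDerivAt (fun w => X s w) (Xu s u) u)
    :
    ∀ s u, Real.cos u ≠ 1 → ¬(r' s = 0 ∧ τ s = 0) →
      (norm3 (cross3 (Xs s u) (Xu s u)))⁻¹ • cross3 (Xs s u) (Xu s u) =
        (Real.sqrt ((r s) ^ 2 * (τ s) ^ 2 + (r' s) ^ 2))⁻¹ •
          ((-(r s * τ s * Real.sin u)) • T s + (r s * τ s * Real.cos u) • N s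
            + r' s • B s) :=
  stmt_5_general α T N B κ τ r r' hκ hr hTT hNN hTN hB hα hT hN hr' X Xs Xu hX hXs hXu
end
end

section
/- The coefficients of the first fundamental form of the surface of osculating circles X(s,u) are E = (1/2)(2 + 8r²τ² sin⁴(u/2) + 4r' sin u + 4r'²(1 - cos u)), F = r(1 + r' sin u), G = r², and consequently √(EG - F²) = 2r √(r²τ² + r'²) sin²(u/2). -/
/-! In the Frenet frame the κ-terms of `X_s` collapse because `r κ = 1`, leaving
`X_s = (cos u + r' sin u) T + (sin u + r' (1 - cos u)) N + r τ (1 - cos u) B` and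
`X_u = r (cos u T + sin u N)`. As `(T, N, T × N)` is orthonormal, `E`, `F`, `G` are read off the
coordinates, and `2 (1 - cos u) - sin² u = (1 - cos u)²` gives
`EG - F² = r² (1 - cos u)² (r² τ² + r'²)` with `1 - cos u = 2 sin² (u / 2)`. -/

open Real

noncomputable section

section Frame

variable {T N : Fin 3 → ℝ}

lemma dot3_cross3_left : dot3 T (cross3 T N) = 0 := by
  simp only [dot3, cross3, Matrix.cons_val_zero, Matrix.cons_val_one, Matrix.cons_val_two,
    Matrix.head_cons, Matrix.tail_cons]
  ring

lemma dot3_cross3_right : dot3 N (cross3 T N) = 0 := by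
  simp only [dot3, cross3, Matrix.cons_val_zero, Matrix.cons_val_one, Matrix.cons_val_two,
    Matrix.head_cons, Matrix.tail_cons]
  ring

-- Lagrange's identity `|T × N|² = |T|²|N|² - (T·N)²`.
lemma dot3_cross3_self (hTT : dot3 T T = 1) (hNN : dot3 N N = 1) (hTN : dot3 T N = 0) :
    dot3 (cross3 T N) (cross3 T N) = 1 := by
  simp only [dot3, cross3, Matrix.cons_val_zero, Matrix.cons_val_one, Matrix.cons_val_two,
    Matrix.head_cons, Matrix.tail_cons] at *
  linear_combination (N 0 ^ 2 + N 1 ^ 2 + N 2 ^ 2) * hTT + hNN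
    - (T 0 * N 0 + T 1 * N 1 + T 2 * N 2) * hTN

lemma dot3_frame_coords (hTT : dot3 T T = 1) (hNN : dot3 N N = 1) (hTN : dot3 T N = 0)
    (a b c a' b' c' : ℝ) :
    dot3 (a • T + b • N + c • cross3 T N) (a' • T + b' • N + c' • cross3 T N)
      = a * a' + b * b' + c * c' := by
  have hBB := dot3_cross3_self hTT hNN hTN
  have hTB : dot3 T (cross3 T N) = 0 := dot3_cross3_left
  have hNB : dot3 N (cross3 T N) = 0 := dot3_cross3_right
  simp only [dot3, Pi.add_apply, Pi.smul_apply, smul_eq_mul] at *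
  linear_combination a * a' * hTT + b * b' * hNN + c * c' * hBB + (a * b' + a' * b) * hTN
    + (a * c' + a' * c) * hTB + (b * c' + b' * c) * hNB

end Frame

section OsculatingCircles

variable {E : Type*} [NormedAddCommGroup E] [NormedSpace ℝ E]

lemma hasDerivAt_osculatingCircles_fst {α T N B : ℝ → E} {κ τ r : ℝ → ℝ} {s r' : ℝ} (u : ℝ)
    (hα : HasDerivAt α (T s) s) (hT : HasDerivAt T (κ s • N s) s)
    (hN : HasDerivAt N ((-κ s) • T s + τ s • B s) s) (hr : HasDerivAt r r' s)
    (hrκ : r s * κ s = 1) :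
    HasDerivAt (fun t => α t + r t • (sin u • T t + (1 - cos u) • N t))
      ((cos u + r' * sin u) • T s + (sin u + r' * (1 - cos u)) • N s
        + (r s * τ s * (1 - cos u)) • B s) s := by
  refine (hα.add (hr.smul ((hT.const_smul (sin u)).add
    (hN.const_smul (1 - cos u))))).congr_deriv ?_
  simp only [Pi.add_apply, Pi.smul_apply]
  linear_combination (norm := module) hrκ • (sin u • N s - (1 - cos u : ℝ) • T s)

lemma hasDerivAt_osculatingCircles_snd (a t n : E) (ρ u : ℝ) :
    HasDerivAt (fun w => a + ρ • (sin w • t + (1 - cos w) • n))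
      ((ρ * cos u) • t + (ρ * sin u) • n) u := by
  have hcos : HasDerivAt (fun w => 1 - cos w) (sin u) u := by
    simpa using (hasDerivAt_cos u).const_sub 1
  refine ((((hasDerivAt_sin u).smul_const t).add (hcos.smul_const n)).const_smul ρ).const_add a
    |>.congr_deriv ?_
  module

end OsculatingCircles

lemma one_sub_cos_eq_two_mul_sin_half_sq (u : ℝ) : 1 - cos u = 2 * sin (u / 2) ^ 2 := by
  rw [sin_sq_eq_half_sub]; ring_nf

lemma sqrt_osculatingCircles_discriminant (ρ τ ρ' u : ℝ) (hρ : 0 ≤ ρ) :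
    √((1 / 2) * (2 + 8 * ρ ^ 2 * τ ^ 2 * sin (u / 2) ^ 4 + 4 * ρ' * sin u
        + 4 * ρ' ^ 2 * (1 - cos u)) * ρ ^ 2 - (ρ * (1 + ρ' * sin u)) ^ 2)
      = 2 * ρ * √(ρ ^ 2 * τ ^ 2 + ρ' ^ 2) * sin (u / 2) ^ 2 := by
  have hhalf := one_sub_cos_eq_two_mul_sin_half_sq u
  have hdisc : (1 / 2) * (2 + 8 * ρ ^ 2 * τ ^ 2 * sin (u / 2) ^ 4 + 4 * ρ' * sin u
        + 4 * ρ' ^ 2 * (1 - cos u)) * ρ ^ 2 - (ρ * (1 + ρ' * sin u)) ^ 2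
      = (2 * ρ * sin (u / 2) ^ 2) ^ 2 * (ρ ^ 2 * τ ^ 2 + ρ' ^ 2) := by
    linear_combination ρ ^ 2 * ρ' ^ 2 * (1 - cos u + 2 * sin (u / 2) ^ 2) * hhalf
      - ρ ^ 2 * ρ' ^ 2 * sin_sq_add_cos_sq u
  rw [hdisc, sqrt_mul (sq_nonneg _), sqrt_sq (by positivity)]
  ring

theorem stmt_8_general
    (α T N B : ℝ → Fin 3 → ℝ) (κ τ r r' : ℝ → ℝ)
    (hκ : ∀ s, 0 < κ s)
    (hr : ∀ s, r s = (κ s)⁻¹)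
    -- Frenet frame and Frenet equations
    (hTT : ∀ s, dot3 (T s) (T s) = 1)
    (hNN : ∀ s, dot3 (N s) (N s) = 1)
    (hTN : ∀ s, dot3 (T s) (N s) = 0)
    (hB : ∀ s, B s = cross3 (T s) (N s))
    (hα : ∀ s, HasDerivAt α (T s) s)
    (hT : ∀ s, HasDerivAt T (κ s • N s) s)
    (hN : ∀ s, HasDerivAt N ((-κ s) • T s + τ s • B s) s)
    (hr' : ∀ s, HasDerivAt r (r' s) s)
    -- the surface of osculating circles and its partial derivatives
    (X Xs Xu : ℝ → ℝ → Fin 3 → ℝ)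
    (hX : ∀ s u, X s u = α s + r s • (Real.sin u • T s + (1 - Real.cos u) • N s))
    (hXs : ∀ s u, HasDerivAt (fun t => X t u) (Xs s u) s)
    (hXu : ∀ s u, HasDerivAt (fun w => X s w) (Xu s u) u)
    :
    ∀ s u,
      dot3 (Xs s u) (Xs s u) =
        (1 / 2) * (2 + 8 * (r s) ^ 2 * (τ s) ^ 2 * Real.sin (u / 2) ^ 4
          + 4 * r' s * Real.sin u + 4 * (r' s) ^ 2 * (1 - Real.cos u))
      ∧ dot3 (Xs s u) (Xu s u) = r s * (1 + r' s * Real.sin u)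
      ∧ dot3 (Xu s u) (Xu s u) = (r s) ^ 2
      ∧ Real.sqrt (dot3 (Xs s u) (Xs s u) * dot3 (Xu s u) (Xu s u)
            - dot3 (Xs s u) (Xu s u) ^ 2)
          = 2 * r s * Real.sqrt ((r s) ^ 2 * (τ s) ^ 2 + (r' s) ^ 2)
              * Real.sin (u / 2) ^ 2 := by
  intro s u
  simp only [hX] at hXs hXu
  have hrκ : r s * κ s = 1 := by rw [hr]; exact inv_mul_cancel₀ (hκ s).ne'
  have hXs_eq : Xs s u = (cos u + r' s * sin u) • T s + (sin u + r' s * (1 - cos u)) • N s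
      + (r s * τ s * (1 - cos u)) • cross3 (T s) (N s) := by
    rw [← hB]
    exact (hXs s u).unique
      (hasDerivAt_osculatingCircles_fst u (hα s) (hT s) (hN s) (hr' s) hrκ)
  have hXu_eq : Xu s u = (r s * cos u) • T s + (r s * sin u) • N s
      + (0 : ℝ) • cross3 (T s) (N s) := by
    rw [zero_smul, add_zero]
    exact (hXu s u).unique (hasDerivAt_osculatingCircles_snd _ _ _ _ u)
  have hframe := dot3_frame_coords (hTT s) (hNN s) (hTN s)
  have hpy := sin_sq_add_cos_sq u
  have hE : dot3 (Xs s u) (Xs s u) =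
      (1 / 2) * (2 + 8 * (r s) ^ 2 * (τ s) ^ 2 * sin (u / 2) ^ 4
        + 4 * r' s * sin u + 4 * (r' s) ^ 2 * (1 - cos u)) := by
    rw [hXs_eq, hframe]
    linear_combination (1 + r' s ^ 2) * hpy
      + r s ^ 2 * τ s ^ 2 * (1 - cos u + 2 * sin (u / 2) ^ 2)
        * one_sub_cos_eq_two_mul_sin_half_sq u
  have hF : dot3 (Xs s u) (Xu s u) = r s * (1 + r' s * sin u) := by
    rw [hXs_eq, hXu_eq, hframe]
    linear_combination r s * hpy
  have hG : dot3 (Xu s u) (Xu s u) = r s ^ 2 := by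
    rw [hXu_eq, hframe]
    linear_combination r s ^ 2 * hpy
  have hr_nonneg : 0 ≤ r s := by rw [hr]; exact inv_nonneg.mpr (hκ s).le
  refine ⟨hE, hF, hG, ?_⟩
  rw [hE, hF, hG]
  exact sqrt_osculatingCircles_discriminant _ _ _ _ hr_nonneg

/-- The coefficients of the first fundamental form of the surface
of osculating circles, and the area element `√(EG - F²)`. -/
theorem stmt_8
    (α T N B : ℝ → Fin 3 → ℝ) (κ τ r r' : ℝ → ℝ)
    (hκ : ∀ s, 0 < κ s)
    (hr : ∀ s, r s = (κ s)⁻¹)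
    -- Frenet frame and Frenet equations
    (hTT : ∀ s, dot3 (T s) (T s) = 1)
    (hNN : ∀ s, dot3 (N s) (N s) = 1)
    (hTN : ∀ s, dot3 (T s) (N s) = 0)
    (hB : ∀ s, B s = cross3 (T s) (N s))
    (hα : ∀ s, HasDerivAt α (T s) s)
    (hT : ∀ s, HasDerivAt T (κ s • N s) s)
    (hN : ∀ s, HasDerivAt N ((-κ s) • T s + τ s • B s) s)
    (hB' : ∀ s, HasDerivAt B ((-τ s) • N s) s)
    (hr' : ∀ s, HasDerivAt r (r' s) s)
    -- the surface of osculating circles and its partial derivatives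
    (X Xs Xu : ℝ → ℝ → Fin 3 → ℝ)
    (hX : ∀ s u, X s u = α s + r s • (Real.sin u • T s + (1 - Real.cos u) • N s))
    (hXs : ∀ s u, HasDerivAt (fun t => X t u) (Xs s u) s)
    (hXu : ∀ s u, HasDerivAt (fun w => X s w) (Xu s u) u)
    :
    ∀ s u,
      dot3 (Xs s u) (Xs s u) =
        (1 / 2) * (2 + 8 * (r s) ^ 2 * (τ s) ^ 2 * Real.sin (u / 2) ^ 4
          + 4 * r' s * Real.sin u + 4 * (r' s) ^ 2 * (1 - Real.cos u))
      ∧ dot3 (Xs s u) (Xu s u) = r s * (1 + r' s * Real.sin u)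
      ∧ dot3 (Xu s u) (Xu s u) = (r s) ^ 2
      ∧ Real.sqrt (dot3 (Xs s u) (Xs s u) * dot3 (Xu s u) (Xu s u)
            - dot3 (Xs s u) (Xu s u) ^ 2)
          = 2 * r s * Real.sqrt ((r s) ^ 2 * (τ s) ^ 2 + (r' s) ^ 2)
              * Real.sin (u / 2) ^ 2 :=
  stmt_8_general α T N B κ τ r r' hκ hr hTT hNN hTN hB hα hT hN hr' X Xs Xu hX hXs hXu
end
end

section
/- The Gaussian curvature of the surface of osculating circles at a regular point (s,u) is K = τ(r²τ³ cos u + r'²τ(cos u - 1) + r(τr'' - r'τ'))/((cos u - 1)(r²τ² + r'²)²). -/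
open Real

noncomputable section

/-!
In the Frenet frame `(T, N, B)` every partial derivative of `X` has explicit coordinates: a
`u`-derivative only differentiates the coordinates, while by the Frenet equations an
`s`-derivative of a vector with coordinates `v` has coordinates `v' + ω × v`, where
`ω = (τ, 0, κ)` is the Darboux vector. The frame is orthonormal and positively oriented, so dot
and triple products may be computed on coordinates. Since `|X_s × X_u|² = EG - F²`, the
Gaussian curvature is `(det(X_ss, X_s, X_u) det(X_uu, X_s, X_u) - det(X_su, X_s, X_u)²) / (EG - F²)²`,
and in coordinates `X_s × X_u = r (1 - cos u) (-r τ sin u, r τ cos u, r')`. Hence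
`EG - F² = r² (1 - cos u)² (r² τ² + r'²)` and each determinant carries a factor `r (1 - cos u)`,
after which the quotient collapses to the stated formula.
-/

theorem dot3_self_nonneg (a : Fin 3 → ℝ) : 0 ≤ dot3 a a := by
  unfold dot3
  nlinarith [mul_self_nonneg (a 0), mul_self_nonneg (a 1), mul_self_nonneg (a 2)]

section CrossProduct

variable (a b : Fin 3 → ℝ)

theorem dot3_cross3_cross3 :
    dot3 (cross3 a b) (cross3 a b) = dot3 a a * dot3 b b - dot3 a b ^ 2 := by
  simp only [dot3, cross3, Matrix.cons_val_zero, Matrix.cons_val_one, Matrix.cons_val_two,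
    Matrix.head_cons, Matrix.tail_cons]
  ring

theorem dot3_self_cross3 : dot3 a (cross3 a b) = 0 := by
  simp only [dot3, cross3, Matrix.cons_val_zero, Matrix.cons_val_one, Matrix.cons_val_two,
    Matrix.head_cons, Matrix.tail_cons]
  ring

theorem dot3_cross3_self_s10 : dot3 b (cross3 a b) = 0 := by
  simp only [dot3, cross3, Matrix.cons_val_zero, Matrix.cons_val_one, Matrix.cons_val_two,
    Matrix.head_cons, Matrix.tail_cons]
  ring

theorem det3_eq_dot3_cross3 (c : Fin 3 → ℝ) : det3 a b c = dot3 (cross3 a b) c := by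
  simp only [det3, dot3, cross3, Matrix.cons_val_zero, Matrix.cons_val_one, Matrix.cons_val_two,
    Matrix.head_cons, Matrix.tail_cons]
  ring

end CrossProduct

theorem gaussCurvature_eq_det3 (a b p q w 𝒩 : Fin 3 → ℝ)
    (h𝒩 : 𝒩 = (norm3 (cross3 a b))⁻¹ • cross3 a b) :
    (dot3 p 𝒩 * dot3 w 𝒩 - dot3 q 𝒩 ^ 2) / (dot3 a a * dot3 b b - dot3 a b ^ 2) =
      (det3 p a b * det3 w a b - det3 q a b ^ 2) / (dot3 a a * dot3 b b - dot3 a b ^ 2) ^ 2 := by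
  have hdot (v : Fin 3 → ℝ) : dot3 v 𝒩 = (norm3 (cross3 a b))⁻¹ * det3 v a b := by
    simp only [h𝒩, det3, dot3, Pi.smul_apply, smul_eq_mul]
    ring
  have hnorm : norm3 (cross3 a b) ^ 2 = dot3 a a * dot3 b b - dot3 a b ^ 2 := by
    rw [norm3, Real.sq_sqrt (dot3_self_nonneg _), dot3_cross3_cross3]
  rw [hdot, hdot, hdot, ← hnorm]
  field_simp

def inFrame (t n b v : Fin 3 → ℝ) : Fin 3 → ℝ := v 0 • t + v 1 • n + v 2 • b

section Frame

variable (t n b : Fin 3 → ℝ)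

theorem det3_inFrame (u v w : Fin 3 → ℝ) :
    det3 (inFrame t n b u) (inFrame t n b v) (inFrame t n b w) = det3 t n b * det3 u v w := by
  simp only [det3, dot3, cross3, inFrame, Matrix.cons_val_zero, Matrix.cons_val_one,
    Matrix.cons_val_two, Matrix.head_cons, Matrix.tail_cons, Pi.add_apply, Pi.smul_apply,
    smul_eq_mul]
  ring

theorem dot3_inFrame (v w : Fin 3 → ℝ) :
    dot3 (inFrame t n b v) (inFrame t n b w) =
      v 0 * w 0 * dot3 t t + v 1 * w 1 * dot3 n n + v 2 * w 2 * dot3 b b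
      + (v 0 * w 1 + v 1 * w 0) * dot3 t n + (v 0 * w 2 + v 2 * w 0) * dot3 t b
      + (v 1 * w 2 + v 2 * w 1) * dot3 n b := by
  simp only [dot3, inFrame, Pi.add_apply, Pi.smul_apply, smul_eq_mul]
  ring

end Frame

section OrthonormalFrame

variable {t n : Fin 3 → ℝ}

theorem dot3_inFrame_of_orthonormal (ht : dot3 t t = 1) (hn : dot3 n n = 1) (htn : dot3 t n = 0)
    (v w : Fin 3 → ℝ) :
    dot3 (inFrame t n (cross3 t n) v) (inFrame t n (cross3 t n) w) = dot3 v w := by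
  rw [dot3_inFrame, dot3_cross3_cross3, dot3_self_cross3, dot3_cross3_self_s10, ht, hn, htn, dot3]
  ring

theorem det3_inFrame_of_orthonormal (ht : dot3 t t = 1) (hn : dot3 n n = 1) (htn : dot3 t n = 0)
    (u v w : Fin 3 → ℝ) :
    det3 (inFrame t n (cross3 t n) u) (inFrame t n (cross3 t n) v) (inFrame t n (cross3 t n) w) =
      det3 u v w := by
  rw [det3_inFrame, det3_eq_dot3_cross3, dot3_cross3_cross3, ht, hn, htn]
  ring

end OrthonormalFrame

theorem hasDerivAt_vec3 {f g h : ℝ → ℝ} {f' g' h' x : ℝ} (hf : HasDerivAt f f' x)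
    (hg : HasDerivAt g g' x) (hh : HasDerivAt h h' x) :
    HasDerivAt (fun x => ![f x, g x, h x]) ![f', g', h'] x :=
  hasDerivAt_pi.2 fun i => by fin_cases i <;> simpa

theorem HasDerivAt.inFrame_const {v : ℝ → Fin 3 → ℝ} {v' : Fin 3 → ℝ} {x : ℝ}
    (t n b : Fin 3 → ℝ) (hv : HasDerivAt v v' x) :
    HasDerivAt (fun x => inFrame t n b (v x)) (inFrame t n b v') x := by
  have hc (i : Fin 3) : HasDerivAt (fun x => v x i) (v' i) x := hasDerivAt_pi.1 hv i
  exact (((hc 0).smul_const t).add ((hc 1).smul_const n)).add ((hc 2).smul_const b)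

theorem HasDerivAt.inFrame_frenet {T N B v : ℝ → Fin 3 → ℝ} {v' : Fin 3 → ℝ} {κ τ s : ℝ}
    (hT : HasDerivAt T (κ • N s) s) (hN : HasDerivAt N ((-κ) • T s + τ • B s) s)
    (hB : HasDerivAt B ((-τ) • N s) s) (hv : HasDerivAt v v' s) :
    HasDerivAt (fun s => inFrame (T s) (N s) (B s) (v s))
      (inFrame (T s) (N s) (B s) (v' + cross3 ![τ, 0, κ] (v s))) s := by
  have hc (i : Fin 3) : HasDerivAt (fun s => v s i) (v' i) s := hasDerivAt_pi.1 hv i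
  refine ((((hc 0).smul hT).add ((hc 1).smul hN)).add ((hc 2).smul hB)).congr_deriv ?_
  ext i
  simp only [inFrame, cross3, Pi.add_apply, Pi.smul_apply, smul_eq_mul, Matrix.cons_val_zero,
    Matrix.cons_val_one, Matrix.cons_val_two, Matrix.head_cons, Matrix.tail_cons]
  ring

theorem hasDerivAt_one_sub_cos (u : ℝ) : HasDerivAt (fun w => 1 - cos w) (sin u) u := by
  simpa using (hasDerivAt_cos u).const_sub 1

/-! Frenet-frame coordinates of `X_s`, `X_u`, `X_ss`, `X_su`, `X_uu` for the surface of
osculating circles. -/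

def oscXs (r r' τ u : ℝ) : Fin 3 → ℝ :=
  ![cos u + r' * sin u, sin u + r' * (1 - cos u), (1 - cos u) * (r * τ)]

def oscXu (r u : ℝ) : Fin 3 → ℝ := ![r * cos u, r * sin u, 0]

def oscXss (κ τ τ' r r' r'' u : ℝ) : Fin 3 → ℝ :=
  ![r'' * sin u - κ * (sin u + r' * (1 - cos u)),
    κ * (cos u + r' * sin u) + r'' * (1 - cos u) - (1 - cos u) * (r * τ) * τ,
    τ * (sin u + r' * (1 - cos u)) + (1 - cos u) * (r' * τ + r * τ')]

def oscXsu (r r' τ u : ℝ) : Fin 3 → ℝ :=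
  ![-sin u + r' * cos u, cos u + r' * sin u, sin u * (r * τ)]

def oscXuu (r u : ℝ) : Fin 3 → ℝ := ![-(r * sin u), r * cos u, 0]

section Coordinates

variable (τ τ' r r' r'' u : ℝ)

theorem hasDerivAt_oscXu : HasDerivAt (oscXu r) (oscXuu r u) u := by
  refine (hasDerivAt_vec3 ((hasDerivAt_cos u).const_mul r) ((hasDerivAt_sin u).const_mul r)
    (hasDerivAt_const u 0)).congr_deriv ?_
  simp only [oscXuu, mul_neg]

theorem hasDerivAt_oscXs_snd : HasDerivAt (fun w => oscXs r r' τ w) (oscXsu r r' τ u) u :=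
  hasDerivAt_vec3 ((hasDerivAt_cos u).add ((hasDerivAt_sin u).const_mul r'))
    ((hasDerivAt_sin u).add ((hasDerivAt_one_sub_cos u).const_mul r'))
    ((hasDerivAt_one_sub_cos u).mul_const (r * τ))

theorem gram_oscXs_oscXu :
    dot3 (oscXs r r' τ u) (oscXs r r' τ u) * dot3 (oscXu r u) (oscXu r u)
      - dot3 (oscXs r r' τ u) (oscXu r u) ^ 2
      = r ^ 2 * (1 - cos u) ^ 2 * (r ^ 2 * τ ^ 2 + r' ^ 2) := by
  have := sin_sq_add_cos_sq u
  simp only [dot3, oscXs, oscXu, Matrix.cons_val_zero, Matrix.cons_val_one, Matrix.cons_val_two,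
    Matrix.head_cons, Matrix.tail_cons]
  grind

theorem det3_oscXuu :
    det3 (oscXuu r u) (oscXs r r' τ u) (oscXu r u) = r ^ 3 * τ * (1 - cos u) := by
  have := sin_sq_add_cos_sq u
  simp only [det3, dot3, cross3, oscXs, oscXu, oscXuu, Matrix.cons_val_zero, Matrix.cons_val_one,
    Matrix.cons_val_two, Matrix.head_cons, Matrix.tail_cons]
  grind

theorem det3_oscXsu :
    det3 (oscXsu r r' τ u) (oscXs r r' τ u) (oscXu r u) =
      r ^ 2 * τ * (1 - cos u) * (1 + r' * sin u) := by
  have := sin_sq_add_cos_sq u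
  simp only [det3, dot3, cross3, oscXs, oscXu, oscXsu, Matrix.cons_val_zero, Matrix.cons_val_one,
    Matrix.cons_val_two, Matrix.head_cons, Matrix.tail_cons]
  grind

theorem det3_oscXss {κ : ℝ} (hrκ : r * κ = 1) :
    det3 (oscXss κ τ τ' r r' r'' u) (oscXs r r' τ u) (oscXu r u) =
      r * (1 - cos u) * (τ * (1 + r' * sin u) ^ 2 + (cos u - 1) *
        (r ^ 2 * τ ^ 3 * cos u + r' ^ 2 * τ * (cos u - 1) + r * (τ * r'' - r' * τ'))) := by
  have := sin_sq_add_cos_sq u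
  simp only [det3, dot3, cross3, oscXs, oscXu, oscXss, Matrix.cons_val_zero, Matrix.cons_val_one,
    Matrix.cons_val_two, Matrix.head_cons, Matrix.tail_cons]
  grind

theorem oscSurface_curvature_coords {κ : ℝ} (hrκ : r * κ = 1) :
    (det3 (oscXss κ τ τ' r r' r'' u) (oscXs r r' τ u) (oscXu r u)
        * det3 (oscXuu r u) (oscXs r r' τ u) (oscXu r u)
        - det3 (oscXsu r r' τ u) (oscXs r r' τ u) (oscXu r u) ^ 2)
      / (dot3 (oscXs r r' τ u) (oscXs r r' τ u) * dot3 (oscXu r u) (oscXu r u)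
        - dot3 (oscXs r r' τ u) (oscXu r u) ^ 2) ^ 2 =
      τ * (r ^ 2 * τ ^ 3 * cos u + r' ^ 2 * τ * (cos u - 1) + r * (τ * r'' - r' * τ'))
        / ((cos u - 1) * (r ^ 2 * τ ^ 2 + r' ^ 2) ^ 2) := by
  rw [det3_oscXss τ τ' r r' r'' u hrκ, det3_oscXuu, det3_oscXsu, gram_oscXs_oscXu]
  set X := r ^ 2 * τ ^ 3 * cos u + r' ^ 2 * τ * (cos u - 1) + r * (τ * r'' - r' * τ')
  set Q := r ^ 2 * τ ^ 2 + r' ^ 2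
  rcases eq_or_ne (cos u - 1) 0 with hc | hc
  · have hc' : 1 - cos u = 0 := by linarith
    simp [hc, hc']
  · have hk : r ^ 4 * (cos u - 1) ^ 3 ≠ 0 := by
      have := left_ne_zero_of_mul_eq_one hrκ
      positivity
    rw [← mul_div_mul_right (τ * X) _ hk]
    congr 1 <;> ring

end Coordinates

section OsculatingCircleSurface

variable {α T N B : ℝ → Fin 3 → ℝ} {r r' τ : ℝ → ℝ} {κ τ' r'' s : ℝ} (u : ℝ)

theorem hasDerivAt_oscSurface_fst (hα : HasDerivAt α (T s) s) (hT : HasDerivAt T (κ • N s) s)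
    (hN : HasDerivAt N ((-κ) • T s + τ s • B s) s) (hr : HasDerivAt r (r' s) s)
    (hrκ : r s * κ = 1) :
    HasDerivAt (fun t => α t + r t • (sin u • T t + (1 - cos u) • N t))
      (inFrame (T s) (N s) (B s) (oscXs (r s) (r' s) (τ s) u)) s := by
  refine (hα.add (hr.smul ((hT.const_smul (sin u)).add (hN.const_smul (1 - cos u))))).congr_deriv ?_
  ext i
  simp only [inFrame, oscXs, Pi.add_apply, Pi.smul_apply, smul_eq_mul, Matrix.cons_val_zero,
    Matrix.cons_val_one, Matrix.cons_val_two, Matrix.head_cons, Matrix.tail_cons]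
  linear_combination (sin u * N s i - (1 - cos u) * T s i) * hrκ

theorem hasDerivAt_oscSurface_snd (a t n b : Fin 3 → ℝ) (ρ : ℝ) :
    HasDerivAt (fun w => a + ρ • (sin w • t + (1 - cos w) • n)) (inFrame t n b (oscXu ρ u)) u := by
  refine ((((hasDerivAt_sin u).smul_const t).add
    ((hasDerivAt_one_sub_cos u).smul_const n)).const_smul ρ).const_add a |>.congr_deriv ?_
  ext i
  simp only [inFrame, oscXu, Pi.add_apply, Pi.smul_apply, smul_eq_mul, Matrix.cons_val_zero,
    Matrix.cons_val_one, Matrix.cons_val_two, Matrix.head_cons, Matrix.tail_cons]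
  ring

theorem hasDerivAt_inFrame_oscXs_fst (hT : HasDerivAt T (κ • N s) s)
    (hN : HasDerivAt N ((-κ) • T s + τ s • B s) s) (hB : HasDerivAt B ((-τ s) • N s) s)
    (hr : HasDerivAt r (r' s) s) (hr' : HasDerivAt r' r'' s) (hτ : HasDerivAt τ τ' s) :
    HasDerivAt (fun t => inFrame (T t) (N t) (B t) (oscXs (r t) (r' t) (τ t) u))
      (inFrame (T s) (N s) (B s) (oscXss κ (τ s) τ' (r s) (r' s) r'' u)) s := by
  have hcoord := hasDerivAt_vec3 ((hr'.mul_const (sin u)).const_add (cos u))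
    ((hr'.mul_const (1 - cos u)).const_add (sin u)) ((hr.mul hτ).const_mul (1 - cos u))
  refine (hT.inFrame_frenet hN hB hcoord).congr_deriv ?_
  congr 1
  ext i
  fin_cases i <;>
  · simp only [oscXss, cross3, Pi.add_apply, Pi.mul_apply, Fin.isValue, Fin.zero_eta, Fin.mk_one,
      Fin.reduceFinMk, Matrix.cons_val, Matrix.cons_val_zero, Matrix.cons_val_one, zero_mul,
      zero_sub, sub_zero]
    ring

end OsculatingCircleSurface

theorem stmt_10_general
    (α T N B : ℝ → Fin 3 → ℝ) (κ τ r r' : ℝ → ℝ)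
    (hκ : ∀ s, 0 < κ s)
    (hr : ∀ s, r s = (κ s)⁻¹)
    -- Frenet frame and Frenet equations
    (hTT : ∀ s, dot3 (T s) (T s) = 1)
    (hNN : ∀ s, dot3 (N s) (N s) = 1)
    (hTN : ∀ s, dot3 (T s) (N s) = 0)
    (hB : ∀ s, B s = cross3 (T s) (N s))
    (hα : ∀ s, HasDerivAt α (T s) s)
    (hT : ∀ s, HasDerivAt T (κ s • N s) s)
    (hN : ∀ s, HasDerivAt N ((-κ s) • T s + τ s • B s) s)
    (hB' : ∀ s, HasDerivAt B ((-τ s) • N s) s)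
    (hr' : ∀ s, HasDerivAt r (r' s) s)
    -- the surface of osculating circles and its partial derivatives
    (X Xs Xu : ℝ → ℝ → Fin 3 → ℝ)
    (hX : ∀ s u, X s u = α s + r s • (Real.sin u • T s + (1 - Real.cos u) • N s))
    (hXs : ∀ s u, HasDerivAt (fun t => X t u) (Xs s u) s)
    (hXu : ∀ s u, HasDerivAt (fun w => X s w) (Xu s u) u)
    (τ' r'' : ℝ → ℝ)
    (hτ' : ∀ s, HasDerivAt τ (τ' s) s)
    (hr'' : ∀ s, HasDerivAt r' (r'' s) s)
    (Xss Xsu Xuu : ℝ → ℝ → Fin 3 → ℝ)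
    (hXss : ∀ s u, HasDerivAt (fun t => Xs t u) (Xss s u) s)
    (hXsu : ∀ s u, HasDerivAt (fun w => Xs s w) (Xsu s u) u)
    (hXuu : ∀ s u, HasDerivAt (fun w => Xu s w) (Xuu s u) u)
    (s u : ℝ)
    (𝒩 : Fin 3 → ℝ)
    (h𝒩 : 𝒩 = (norm3 (cross3 (Xs s u) (Xu s u)))⁻¹ • cross3 (Xs s u) (Xu s u))
    (EE FF GG ee ff gg : ℝ)
    (hE : EE = dot3 (Xs s u) (Xs s u)) (hF : FF = dot3 (Xs s u) (Xu s u))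
    (hG : GG = dot3 (Xu s u) (Xu s u))
    (he : ee = dot3 (Xss s u) 𝒩) (hf : ff = dot3 (Xsu s u) 𝒩)
    (hg : gg = dot3 (Xuu s u) 𝒩) :
    (ee * gg - ff ^ 2) / (EE * GG - FF ^ 2) =
      τ s * ((r s) ^ 2 * (τ s) ^ 3 * Real.cos u
          + (r' s) ^ 2 * τ s * (Real.cos u - 1)
          + r s * (τ s * r'' s - r' s * τ' s))
        / ((Real.cos u - 1) * ((r s) ^ 2 * (τ s) ^ 2 + (r' s) ^ 2) ^ 2) := by
  have hrκ (t : ℝ) : r t * κ t = 1 := by rw [hr t]; exact inv_mul_cancel₀ (hκ t).ne'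
  simp only [hX] at hXs hXu
  have hXs_eq (t w : ℝ) : Xs t w = inFrame (T t) (N t) (B t) (oscXs (r t) (r' t) (τ t) w) :=
    (hXs t w).unique (hasDerivAt_oscSurface_fst w (hα t) (hT t) (hN t) (hr' t) (hrκ t))
  have hXu_eq (t w : ℝ) : Xu t w = inFrame (T t) (N t) (B t) (oscXu (r t) w) :=
    (hXu t w).unique (hasDerivAt_oscSurface_snd w _ _ _ _ _)
  simp only [hXs_eq, hXu_eq] at hXss hXsu hXuu
  have hXss_eq := (hXss s u).unique
    (hasDerivAt_inFrame_oscXs_fst u (hT s) (hN s) (hB' s) (hr' s) (hr'' s) (hτ' s))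
  have hXsu_eq := (hXsu s u).unique ((hasDerivAt_oscXs_snd _ _ _ u).inFrame_const _ _ _)
  have hXuu_eq := (hXuu s u).unique ((hasDerivAt_oscXu _ u).inFrame_const _ _ _)
  subst hE hF hG he hf hg
  rw [gaussCurvature_eq_det3 _ _ _ _ _ _ h𝒩, hXss_eq, hXsu_eq, hXuu_eq, hXs_eq, hXu_eq, hB s]
  simp only [det3_inFrame_of_orthonormal (hTT s) (hNN s) (hTN s),
    dot3_inFrame_of_orthonormal (hTT s) (hNN s) (hTN s)]
  exact oscSurface_curvature_coords _ _ _ _ _ u (hrκ s)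

/-- The Gaussian curvature `K = (eg - f²)/(EG - F²)` of the surface of
osculating circles at a regular point `(s, u)`. -/
theorem stmt_10
    (α T N B : ℝ → Fin 3 → ℝ) (κ τ r r' : ℝ → ℝ)
    (hκ : ∀ s, 0 < κ s)
    (hr : ∀ s, r s = (κ s)⁻¹)
    -- Frenet frame and Frenet equations
    (hTT : ∀ s, dot3 (T s) (T s) = 1)
    (hNN : ∀ s, dot3 (N s) (N s) = 1)
    (hTN : ∀ s, dot3 (T s) (N s) = 0)
    (hB : ∀ s, B s = cross3 (T s) (N s))
    (hα : ∀ s, HasDerivAt α (T s) s)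
    (hT : ∀ s, HasDerivAt T (κ s • N s) s)
    (hN : ∀ s, HasDerivAt N ((-κ s) • T s + τ s • B s) s)
    (hB' : ∀ s, HasDerivAt B ((-τ s) • N s) s)
    (hr' : ∀ s, HasDerivAt r (r' s) s)
    -- the surface of osculating circles and its partial derivatives
    (X Xs Xu : ℝ → ℝ → Fin 3 → ℝ)
    (hX : ∀ s u, X s u = α s + r s • (Real.sin u • T s + (1 - Real.cos u) • N s))
    (hXs : ∀ s u, HasDerivAt (fun t => X t u) (Xs s u) s)
    (hXu : ∀ s u, HasDerivAt (fun w => X s w) (Xu s u) u)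
    (τ' r'' : ℝ → ℝ)
    (hτ' : ∀ s, HasDerivAt τ (τ' s) s)
    (hr'' : ∀ s, HasDerivAt r' (r'' s) s)
    (Xss Xsu Xuu : ℝ → ℝ → Fin 3 → ℝ)
    (hXss : ∀ s u, HasDerivAt (fun t => Xs t u) (Xss s u) s)
    (hXsu : ∀ s u, HasDerivAt (fun w => Xs s w) (Xsu s u) u)
    (hXuu : ∀ s u, HasDerivAt (fun w => Xu s w) (Xuu s u) u)
    (s u : ℝ) (hu : Real.cos u ≠ 1) (hreg : ¬(r' s = 0 ∧ τ s = 0))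
    (𝒩 : Fin 3 → ℝ)
    (h𝒩 : 𝒩 = (norm3 (cross3 (Xs s u) (Xu s u)))⁻¹ • cross3 (Xs s u) (Xu s u))
    (EE FF GG ee ff gg : ℝ)
    (hE : EE = dot3 (Xs s u) (Xs s u)) (hF : FF = dot3 (Xs s u) (Xu s u))
    (hG : GG = dot3 (Xu s u) (Xu s u))
    (he : ee = dot3 (Xss s u) 𝒩) (hf : ff = dot3 (Xsu s u) 𝒩)
    (hg : gg = dot3 (Xuu s u) 𝒩) :
    (ee * gg - ff ^ 2) / (EE * GG - FF ^ 2) =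
      τ s * ((r s) ^ 2 * (τ s) ^ 3 * Real.cos u
          + (r' s) ^ 2 * τ s * (Real.cos u - 1)
          + r s * (τ s * r'' s - r' s * τ' s))
        / ((Real.cos u - 1) * ((r s) ^ 2 * (τ s) ^ 2 + (r' s) ^ 2) ^ 2) :=
  stmt_10_general α T N B κ τ r r' hκ hr hTT hNN hTN hB hα hT hN hB' hr' X Xs Xu hX hXs hXu τ' r''
    hτ' hr'' Xss Xsu Xuu hXss hXsu hXuu s u 𝒩 h𝒩 EE FF GG ee ff gg hE hF hG he hf hg
end
end

section
/- The mean curvature of the surface of osculating circles at a regular point (s,u) is H = -(r²τ³(2cos u - 1) + 2r'²τ(cos u - 1) + r(τr'' - r'τ'))/(2(1 - cos u)(r²τ² + r'²)^{3/2}). -/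
open Real

noncomputable section

lemma dot3_smul_right (k : ℝ) (x y : Fin 3 → ℝ) : dot3 x (k • y) = k * dot3 x y := by
  simp [dot3]; ring

lemma lagrange3 (x y : Fin 3 → ℝ) :
    dot3 (cross3 x y) (cross3 x y) = dot3 x x * dot3 y y - (dot3 x y)^2 := by
  simp [dot3, cross3]; ring

lemma dot3_comb_s11 (a b : Fin 3 → ℝ) (ha : dot3 a a = 1) (hb : dot3 b b = 1)
    (hab : dot3 a b = 0) (x1 x2 x3 y1 y2 y3 : ℝ) :
    dot3 ((x1 • a + x2 • b) + x3 • cross3 a b) ((y1 • a + y2 • b) + y3 • cross3 a b)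
      = x1*y1 + x2*y2 + x3*y3 := by
  simp only [dot3, cross3] at ha hb hab ⊢
  simp only [Pi.add_apply, Pi.smul_apply, smul_eq_mul, Matrix.cons_val_zero,
    Matrix.cons_val_one, Matrix.head_cons, Matrix.cons_val_two, Matrix.tail_cons]
  linear_combination (x1*y1 + x3*y3*(b 0*b 0 + b 1*b 1 + b 2*b 2)) * ha
    + (x2*y2 + x3*y3) * hb
    + (x1*y2 + x2*y1 - x3*y3*(a 0*b 0 + a 1*b 1 + a 2*b 2)) * hab

lemma det3_comb (a b : Fin 3 → ℝ) (ha : dot3 a a = 1) (hb : dot3 b b = 1)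
    (hab : dot3 a b = 0) (x1 x2 x3 y1 y2 y3 z1 z2 z3 : ℝ) :
    det3 ((x1 • a + x2 • b) + x3 • cross3 a b) ((y1 • a + y2 • b) + y3 • cross3 a b)
      ((z1 • a + z2 • b) + z3 • cross3 a b)
      = x1*(y2*z3 - y3*z2) - x2*(y1*z3 - y3*z1) + x3*(y1*z2 - y2*z1) := by
  simp only [det3, dot3, cross3] at ha hb hab ⊢
  simp only [Pi.add_apply, Pi.smul_apply, smul_eq_mul, Matrix.cons_val_zero,
    Matrix.cons_val_one, Matrix.head_cons, Matrix.cons_val_two, Matrix.tail_cons]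
  linear_combination ((x1*(y2*z3 - y3*z2) - x2*(y1*z3 - y3*z1) + x3*(y1*z2 - y2*z1)) * (b 0*b 0 + b 1*b 1 + b 2*b 2)) * ha
    + (x1*(y2*z3 - y3*z2) - x2*(y1*z3 - y3*z1) + x3*(y1*z2 - y2*z1)) * hb
    - ((x1*(y2*z3 - y3*z2) - x2*(y1*z3 - y3*z1) + x3*(y1*z2 - y2*z1)) * (a 0*b 0 + a 1*b 1 + a 2*b 2)) * hab

lemma key (R K P P2 t t2 S C EE FF GG ee ff gg : ℝ)
    (hS : S^2 + C^2 = 1) (hK : R * K = 1) (hR : 0 < R) (hC : C < 1)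
    (hQ : 0 < R^2*t^2 + P^2)
    (hEE : EE = (C + P * S)*(C + P * S) + (S + P * (1 - C))*(S + P * (1 - C)) + (R * t * (1 - C))*(R * t * (1 - C)))
    (hFF : FF = (C + P * S)*(R * C) + (S + P * (1 - C))*(R * S) + (R * t * (1 - C))*0)
    (hGG : GG = (R * C)*(R * C) + (R * S)*(R * S) + 0*0)
    (hee : ee = ((P2 * S - (S + P * (1 - C)) * K)*((S + P * (1 - C))*0 - (R * t * (1 - C))*(R * S)) - ((C + P * S) * K + P2 * (1 - C) - R * t * (1 - C) * t)*((C + P * S)*0 - (R * t * (1 - C))*(R * C)) + ((S + P * (1 - C)) * t + (P * t + R * t2) * (1 - C))*((C + P * S)*(R * S) - (S + P * (1 - C))*(R * C))) / (R * (1 - C) * Real.sqrt (R^2*t^2 + P^2)))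
    (hff : ff = ((-S + P * C)*((S + P * (1 - C))*0 - (R * t * (1 - C))*(R * S)) - (C + P * S)*((C + P * S)*0 - (R * t * (1 - C))*(R * C)) + (R * t * S)*((C + P * S)*(R * S) - (S + P * (1 - C))*(R * C))) / (R * (1 - C) * Real.sqrt (R^2*t^2 + P^2)))
    (hgg : gg = ((-(R * S))*((S + P * (1 - C))*0 - (R * t * (1 - C))*(R * S)) - (R * C)*((C + P * S)*0 - (R * t * (1 - C))*(R * C)) + 0*((C + P * S)*(R * S) - (S + P * (1 - C))*(R * C))) / (R * (1 - C) * Real.sqrt (R^2*t^2 + P^2))) :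
    (ee * GG - 2 * ff * FF + gg * EE) / (2 * (EE * GG - FF ^ 2)) =
      -((R ^ 2 * t ^ 3 * (2 * C - 1) + 2 * P ^ 2 * t * (C - 1) + R * (t * P2 - P * t2))
        / (2 * (1 - C) * Real.sqrt ((R^2*t^2 + P^2) ^ 3))) := by
  have h1C : 0 < 1 - C := by linarith
  have hsq : Real.sqrt (R^2*t^2 + P^2) ^ 2 = R^2*t^2 + P^2 := Real.sq_sqrt hQ.le
  have hsqpos : 0 < Real.sqrt (R^2*t^2 + P^2) := Real.sqrt_pos.mpr hQ
  set sq := Real.sqrt (R^2*t^2 + P^2) with hsqdef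
  have hq3 : Real.sqrt ((R^2*t^2 + P^2) ^ 3) = (R^2*t^2 + P^2) * sq := by
    rw [show (R^2*t^2 + P^2) ^ 3 = ((R^2*t^2 + P^2) * sq)^2 by rw [mul_pow, hsq]; ring]
    exact Real.sqrt_sq (by positivity)
  have hM : R * (1 - C) * sq ≠ 0 :=
    ne_of_gt (mul_pos (mul_pos hR h1C) hsqpos)
  have hD : ((C + P * S)*(C + P * S) + (S + P * (1 - C))*(S + P * (1 - C)) + (R * t * (1 - C))*(R * t * (1 - C)))*((R * C)*(R * C) + (R * S)*(R * S) + 0*0) - ((C + P * S)*(R * C) + (S + P * (1 - C))*(R * S) + (R * t * (1 - C))*0)^2 = R^2*(1-C)^2*(R^2*t^2 + P^2) := by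
    linear_combination (R^4*t^2*C^2 - 2*R^4*t^2*C + R^4*t^2 + R^2*P^2*S^2 + R^2*P^2*C^2 - 2*R^2*P^2*C + R^2*P^2) * hS
  have hX : ((P2 * S - (S + P * (1 - C)) * K)*((S + P * (1 - C))*0 - (R * t * (1 - C))*(R * S)) - ((C + P * S) * K + P2 * (1 - C) - R * t * (1 - C) * t)*((C + P * S)*0 - (R * t * (1 - C))*(R * C)) + ((S + P * (1 - C)) * t + (P * t + R * t2) * (1 - C))*((C + P * S)*(R * S) - (S + P * (1 - C))*(R * C))) / (R * (1 - C) * sq) * ((R * C)*(R * C) + (R * S)*(R * S) + 0*0)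
      - 2 * (((-S + P * C)*((S + P * (1 - C))*0 - (R * t * (1 - C))*(R * S)) - (C + P * S)*((C + P * S)*0 - (R * t * (1 - C))*(R * C)) + (R * t * S)*((C + P * S)*(R * S) - (S + P * (1 - C))*(R * C))) / (R * (1 - C) * sq)) * ((C + P * S)*(R * C) + (S + P * (1 - C))*(R * S) + (R * t * (1 - C))*0)
      + ((-(R * S))*((S + P * (1 - C))*0 - (R * t * (1 - C))*(R * S)) - (R * C)*((C + P * S)*0 - (R * t * (1 - C))*(R * C)) + 0*((C + P * S)*(R * S) - (S + P * (1 - C))*(R * C))) / (R * (1 - C) * sq) * ((C + P * S)*(C + P * S) + (S + P * (1 - C))*(S + P * (1 - C)) + (R * t * (1 - C))*(R * t * (1 - C)))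
      = (((P2 * S - (S + P * (1 - C)) * K)*((S + P * (1 - C))*0 - (R * t * (1 - C))*(R * S)) - ((C + P * S) * K + P2 * (1 - C) - R * t * (1 - C) * t)*((C + P * S)*0 - (R * t * (1 - C))*(R * C)) + ((S + P * (1 - C)) * t + (P * t + R * t2) * (1 - C))*((C + P * S)*(R * S) - (S + P * (1 - C))*(R * C))) * ((R * C)*(R * C) + (R * S)*(R * S) + 0*0) - 2 * ((-S + P * C)*((S + P * (1 - C))*0 - (R * t * (1 - C))*(R * S)) - (C + P * S)*((C + P * S)*0 - (R * t * (1 - C))*(R * C)) + (R * t * S)*((C + P * S)*(R * S) - (S + P * (1 - C))*(R * C))) * ((C + P * S)*(R * C) + (S + P * (1 - C))*(R * S) + (R * t * (1 - C))*0) + ((-(R * S))*((S + P * (1 - C))*0 - (R * t * (1 - C))*(R * S)) - (R * C)*((C + P * S)*0 - (R * t * (1 - C))*(R * C)) + 0*((C + P * S)*(R * S) - (S + P * (1 - C))*(R * C))) * ((C + P * S)*(C + P * S) + (S + P * (1 - C))*(S + P * (1 - C)) + (R * t * (1 - C))*(R * t * (1 - C))))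
        / (R * (1 - C) * sq) := by
    field_simp
  have hDpos : 0 < 2 * (((C + P * S)*(C + P * S) + (S + P * (1 - C))*(S + P * (1 - C)) + (R * t * (1 - C))*(R * t * (1 - C)))*((R * C)*(R * C) + (R * S)*(R * S) + 0*0) - ((C + P * S)*(R * C) + (S + P * (1 - C))*(R * S) + (R * t * (1 - C))*0)^2) := by
    rw [hD]
    exact mul_pos two_pos (mul_pos (mul_pos (pow_pos hR 2) (pow_pos h1C 2)) hQ)
  have hBpos : 0 < 2 * (1 - C) * ((R^2*t^2 + P^2) * sq) :=
    mul_pos (mul_pos two_pos h1C) (mul_pos hQ hsqpos)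
  rw [hq3, hEE, hFF, hGG, hee, hff, hgg, hX, div_div, ← neg_div,
    div_eq_div_iff (ne_of_gt (mul_pos (mul_pos (mul_pos hR h1C) hsqpos) hDpos)) (ne_of_gt hBpos)]
  linear_combination (2*R^6*P*t^2*t2*S^2*C^2*sq - 4*R^6*P*t^2*t2*S^2*C*sq + 2*R^6*P*t^2*t2*S^2*sq + 2*R^6*P*t^2*t2*C^4*sq - 4*R^6*P*t^2*t2*C^3*sq + 2*R^6*P*t^2*t2*C^2*sq - 2*R^6*P2*t^3*S^2*C^2*sq + 4*R^6*P2*t^3*S^2*C*sq - 2*R^6*P2*t^3*S^2*sq - 2*R^6*P2*t^3*C^4*sq + 4*R^6*P2*t^3*C^3*sq - 2*R^6*P2*t^3*C^2*sq + 2*R^5*P^2*t^3*S^2*C^2*sq - 2*R^5*P^2*t^3*S^2*C*sq + 2*R^5*P^2*t^3*C^4*sq - 4*R^5*P^2*t^3*C^3*sq + 2*R^5*P^2*t^3*C^2*sq + 2*R^5*P*t^3*S^3*C*sq - 2*R^5*P*t^3*S^3*sq + 2*R^5*P*t^3*S*C^3*sq - 2*R^5*P*t^3*S*C^2*sq + 2*R^4*P^3*t2*S^2*C^2*sq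 - 2*R^4*P^3*t2*S^2*C*sq + 2*R^4*P^3*t2*C^4*sq - 4*R^4*P^3*t2*C^3*sq + 2*R^4*P^3*t2*C^2*sq - 2*R^4*P^2*P2*t*S^2*C^2*sq + 2*R^4*P^2*P2*t*S^2*C*sq - 2*R^4*P^2*P2*t*C^4*sq + 4*R^4*P^2*P2*t*C^3*sq - 2*R^4*P^2*P2*t*C^2*sq + 2*R^3*P^4*t*S^2*C^2*sq - 2*R^3*P^4*t*S^2*sq + 2*R^3*P^4*t*C^4*sq - 4*R^3*P^4*t*C^3*sq + 2*R^3*P^4*t*C^2*sq + 2*R^3*P^3*t*S^3*C*sq - 2*R^3*P^3*t*S^3*sq + 2*R^3*P^3*t*S*C^3*sq - 2*R^3*P^3*t*S*C^2*sq) * hS + (0) * hsq + (2*R^5*P*t^3*S^3*C^2*sq - 4*R^5*P*t^3*S^3*C*sq + 2*R^5*P*t^3*S^3*sq + 2*R^5*P*t^3*S*C^4*sq - 4*R^5*P*t^3*S*C^3*sq + 2*R^5*P*t^3*S*C^2*sq + 2*R^5*t^3*S^4*C^2*sq - 4*R^5*t^3*S^4*C*sq + 2*R^5*t^3*S^4*sq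 + 4*R^5*t^3*S^2*C^4*sq - 8*R^5*t^3*S^2*C^3*sq + 4*R^5*t^3*S^2*C^2*sq + 2*R^5*t^3*C^6*sq - 4*R^5*t^3*C^5*sq + 2*R^5*t^3*C^4*sq + 2*R^3*P^3*t*S^3*C^2*sq - 4*R^3*P^3*t*S^3*C*sq + 2*R^3*P^3*t*S^3*sq + 2*R^3*P^3*t*S*C^4*sq - 4*R^3*P^3*t*S*C^3*sq + 2*R^3*P^3*t*S*C^2*sq + 2*R^3*P^2*t*S^4*C^2*sq - 4*R^3*P^2*t*S^4*C*sq + 2*R^3*P^2*t*S^4*sq + 4*R^3*P^2*t*S^2*C^4*sq - 8*R^3*P^2*t*S^2*C^3*sq + 4*R^3*P^2*t*S^2*C^2*sq + 2*R^3*P^2*t*C^6*sq - 4*R^3*P^2*t*C^5*sq + 2*R^3*P^2*t*C^4*sq) * hK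

/-- The mean curvature `H = (eG - 2fF + gE)/(2(EG - F²))` of the
surface of osculating circles at a regular point `(s, u)`. -/
theorem stmt_11
    (α T N B : ℝ → Fin 3 → ℝ) (κ τ r r' : ℝ → ℝ)
    (hκ : ∀ s, 0 < κ s)
    (hr : ∀ s, r s = (κ s)⁻¹)
    -- Frenet frame and Frenet equations
    (hTT : ∀ s, dot3 (T s) (T s) = 1)
    (hNN : ∀ s, dot3 (N s) (N s) = 1)
    (hTN : ∀ s, dot3 (T s) (N s) = 0)
    (hB : ∀ s, B s = cross3 (T s) (N s))
    (hα : ∀ s, HasDerivAt α (T s) s)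
    (hT : ∀ s, HasDerivAt T (κ s • N s) s)
    (hN : ∀ s, HasDerivAt N ((-κ s) • T s + τ s • B s) s)
    (hB' : ∀ s, HasDerivAt B ((-τ s) • N s) s)
    (hr' : ∀ s, HasDerivAt r (r' s) s)
    -- the surface of osculating circles and its partial derivatives
    (X Xs Xu : ℝ → ℝ → Fin 3 → ℝ)
    (hX : ∀ s u, X s u = α s + r s • (Real.sin u • T s + (1 - Real.cos u) • N s))
    (hXs : ∀ s u, HasDerivAt (fun t => X t u) (Xs s u) s)
    (hXu : ∀ s u, HasDerivAt (fun w => X s w) (Xu s u) u)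
    (τ' r'' : ℝ → ℝ)
    (hτ' : ∀ s, HasDerivAt τ (τ' s) s)
    (hr'' : ∀ s, HasDerivAt r' (r'' s) s)
    (Xss Xsu Xuu : ℝ → ℝ → Fin 3 → ℝ)
    (hXss : ∀ s u, HasDerivAt (fun t => Xs t u) (Xss s u) s)
    (hXsu : ∀ s u, HasDerivAt (fun w => Xs s w) (Xsu s u) u)
    (hXuu : ∀ s u, HasDerivAt (fun w => Xu s w) (Xuu s u) u)
    (s u : ℝ) (hu : Real.cos u ≠ 1) (hreg : ¬(r' s = 0 ∧ τ s = 0))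
    (𝒩 : Fin 3 → ℝ)
    (h𝒩 : 𝒩 = (norm3 (cross3 (Xs s u) (Xu s u)))⁻¹ • cross3 (Xs s u) (Xu s u))
    (EE FF GG ee ff gg : ℝ)
    (hE : EE = dot3 (Xs s u) (Xs s u)) (hF : FF = dot3 (Xs s u) (Xu s u))
    (hG : GG = dot3 (Xu s u) (Xu s u))
    (he : ee = dot3 (Xss s u) 𝒩) (hf : ff = dot3 (Xsu s u) 𝒩)
    (hg : gg = dot3 (Xuu s u) 𝒩) :
    (ee * GG - 2 * ff * FF + gg * EE) / (2 * (EE * GG - FF ^ 2)) =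
      -(((r s) ^ 2 * (τ s) ^ 3 * (2 * Real.cos u - 1)
          + 2 * (r' s) ^ 2 * τ s * (Real.cos u - 1)
          + r s * (τ s * r'' s - r' s * τ' s))
        / (2 * (1 - Real.cos u)
            * Real.sqrt (((r s) ^ 2 * (τ s) ^ 2 + (r' s) ^ 2) ^ 3))) := by
  have hRpos : 0 < r s := by rw [hr]; exact inv_pos.mpr (hκ s)
  have hKrel : ∀ t, r t * κ t = 1 := fun t => by
    rw [hr]; exact inv_mul_cancel₀ (ne_of_gt (hκ t))
  have hCtop : Real.cos u < 1 := lt_of_le_of_ne (Real.cos_le_one u) hu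
  have hQpos : 0 < (r s)^2*(τ s)^2 + (r' s)^2 := by
    rcases not_and_or.mp hreg with h | h
    · have h2 : 0 < (r' s)^2 := by positivity
      nlinarith [sq_nonneg (r s * τ s)]
    · have h2 : 0 < (r s * τ s)^2 := by positivity
      nlinarith [sq_nonneg (r' s)]
  -- first partial derivatives
  have hXsEq : ∀ t w, Xs t w = ((Real.cos w + r' t * Real.sin w) • T t
      + (Real.sin w + r' t * (1 - Real.cos w)) • N t)
      + (r t * τ t * (1 - Real.cos w)) • B t := by
    intro t w
    have hfun : (fun t => X t w)
        = fun t => α t + r t • (Real.sin w • T t + (1 - Real.cos w) • N t) :=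
      funext fun t => hX t w
    have d1 : HasDerivAt (fun t => α t + r t • (Real.sin w • T t + (1 - Real.cos w) • N t))
        (T t + (r t • (Real.sin w • (κ t • N t)
            + (1 - Real.cos w) • ((-κ t) • T t + τ t • B t))
          + r' t • (Real.sin w • T t + (1 - Real.cos w) • N t))) t :=
      (hα t).add ((hr' t).smul (((hT t).const_smul (Real.sin w)).add
        ((hN t).const_smul (1 - Real.cos w))))
    have := (hfun ▸ (hXs t w)).unique d1
    rw [this]
    have hk := hKrel t
    match_scalars
    · linear_combination (Real.cos w - 1) * hk
    · linear_combination (Real.sin w) * hk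
    · ring
  have hXuEq : ∀ w, Xu s w = ((r s * Real.cos w) • T s + (r s * Real.sin w) • N s)
      + (0:ℝ) • B s := by
    intro w
    have hfun : (fun w => X s w)
        = fun w => α s + r s • (Real.sin w • T s + (1 - Real.cos w) • N s) :=
      funext fun w => hX s w
    have d1 : HasDerivAt (fun w => α s + r s • (Real.sin w • T s + (1 - Real.cos w) • N s))
        (r s • (Real.cos w • T s + (0 - -Real.sin w) • N s)) w :=
      (((((Real.hasDerivAt_sin w).smul_const (T s)).add
        (((hasDerivAt_const w (1:ℝ)).sub (Real.hasDerivAt_cos w)).smul_const (N s))).const_smul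
          (r s)).const_add (α s))
    have := (hfun ▸ (hXu s w)).unique d1
    rw [this]
    match_scalars <;> ring
  -- second partial derivatives
  have hXssEq : Xss s u = ((r'' s * Real.sin u - (Real.sin u + r' s * (1 - Real.cos u)) * κ s) • T s + ((Real.cos u + r' s * Real.sin u) * κ s + r'' s * (1 - Real.cos u) - r s * τ s * (1 - Real.cos u) * τ s) • N s) + ((Real.sin u + r' s * (1 - Real.cos u)) * τ s + (r' s * τ s + r s * τ' s) * (1 - Real.cos u)) • B s := by
    have hfun : (fun t => Xs t u) = fun t => ((Real.cos u + r' t * Real.sin u) • T t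
        + (Real.sin u + r' t * (1 - Real.cos u)) • N t)
        + (r t * τ t * (1 - Real.cos u)) • B t :=
      funext fun t => hXsEq t u
    have c1 : HasDerivAt (fun t => Real.cos u + r' t * Real.sin u)
        (r'' s * Real.sin u) s := ((hr'' s).mul_const (Real.sin u)).const_add (Real.cos u)
    have c2 : HasDerivAt (fun t => Real.sin u + r' t * (1 - Real.cos u))
        (r'' s * (1 - Real.cos u)) s :=
      ((hr'' s).mul_const (1 - Real.cos u)).const_add (Real.sin u)
    have c3 : HasDerivAt (fun t => r t * τ t * (1 - Real.cos u))
        ((r' s * τ s + r s * τ' s) * (1 - Real.cos u)) s :=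
      ((hr' s).mul (hτ' s)).mul_const (1 - Real.cos u)
    have d1 := ((c1.smul (hT s)).add (c2.smul (hN s))).add (c3.smul (hB' s))
    have := (hfun ▸ (hXss s u)).unique d1
    rw [this]
    match_scalars <;> ring
  have hXsuEq : Xsu s u = ((-Real.sin u + r' s * Real.cos u) • T s + (Real.cos u + r' s * Real.sin u) • N s) + (r s * τ s * Real.sin u) • B s := by
    have hfun : (fun w => Xs s w) = fun w => ((Real.cos w + r' s * Real.sin w) • T s
        + (Real.sin w + r' s * (1 - Real.cos w)) • N s)
        + (r s * τ s * (1 - Real.cos w)) • B s :=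
      funext fun w => hXsEq s w
    have c1 : HasDerivAt (fun w => Real.cos w + r' s * Real.sin w)
        (-Real.sin u + r' s * Real.cos u) u :=
      (Real.hasDerivAt_cos u).add ((Real.hasDerivAt_sin u).const_mul (r' s))
    have c2 : HasDerivAt (fun w => Real.sin w + r' s * (1 - Real.cos w))
        (Real.cos u + r' s * (0 - -Real.sin u)) u :=
      (Real.hasDerivAt_sin u).add
        (((hasDerivAt_const u (1:ℝ)).sub (Real.hasDerivAt_cos u)).const_mul (r' s))
    have c3 : HasDerivAt (fun w => r s * τ s * (1 - Real.cos w))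
        (r s * τ s * (0 - -Real.sin u)) u :=
      ((hasDerivAt_const u (1:ℝ)).sub (Real.hasDerivAt_cos u)).const_mul (r s * τ s)
    have d1 := ((c1.smul_const (T s)).add (c2.smul_const (N s))).add (c3.smul_const (B s))
    have := (hfun ▸ (hXsu s u)).unique d1
    rw [this]
    match_scalars <;> ring
  have hXuuEq : Xuu s u = ((-(r s * Real.sin u)) • T s + (r s * Real.cos u) • N s) + (0:ℝ) • B s := by
    have hfun : (fun w => Xu s w) = fun w => ((r s * Real.cos w) • T s
        + (r s * Real.sin w) • N s) + (0:ℝ) • B s :=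
      funext fun w => hXuEq w
    have c1 : HasDerivAt (fun w => r s * Real.cos w) (r s * -Real.sin u) u :=
      (Real.hasDerivAt_cos u).const_mul (r s)
    have c2 : HasDerivAt (fun w => r s * Real.sin w) (r s * Real.cos u) u :=
      (Real.hasDerivAt_sin u).const_mul (r s)
    have d1 := ((c1.smul_const (T s)).add (c2.smul_const (N s))).add
      (hasDerivAt_const u ((0:ℝ) • B s))
    have := (hfun ▸ (hXuu s u)).unique d1
    rw [this]
    match_scalars <;> ring
  -- combos with cross3
  have hXsC : Xs s u = ((Real.cos u + r' s * Real.sin u) • T s + (Real.sin u + r' s * (1 - Real.cos u)) • N s) + (r s * τ s * (1 - Real.cos u)) • cross3 (T s) (N s) := by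
    rw [hXsEq s u, hB s]
  have hXuC : Xu s u = ((r s * Real.cos u) • T s + (r s * Real.sin u) • N s) + (0:ℝ) • cross3 (T s) (N s) := by
    rw [hXuEq u, hB s]
  have hXssC : Xss s u = ((r'' s * Real.sin u - (Real.sin u + r' s * (1 - Real.cos u)) * κ s) • T s + ((Real.cos u + r' s * Real.sin u) * κ s + r'' s * (1 - Real.cos u) - r s * τ s * (1 - Real.cos u) * τ s) • N s) + ((Real.sin u + r' s * (1 - Real.cos u)) * τ s + (r' s * τ s + r s * τ' s) * (1 - Real.cos u)) • cross3 (T s) (N s) := by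
    rw [hXssEq, hB s]
  have hXsuC : Xsu s u = ((-Real.sin u + r' s * Real.cos u) • T s + (Real.cos u + r' s * Real.sin u) • N s) + (r s * τ s * Real.sin u) • cross3 (T s) (N s) := by
    rw [hXsuEq, hB s]
  have hXuuC : Xuu s u = ((-(r s * Real.sin u)) • T s + (r s * Real.cos u) • N s) + (0:ℝ) • cross3 (T s) (N s) := by
    rw [hXuuEq, hB s]
  -- fundamental form values
  have hEEv : EE = (Real.cos u + r' s * Real.sin u)*(Real.cos u + r' s * Real.sin u) + (Real.sin u + r' s * (1 - Real.cos u))*(Real.sin u + r' s * (1 - Real.cos u)) + (r s * τ s * (1 - Real.cos u))*(r s * τ s * (1 - Real.cos u)) := by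
    rw [hE, hXsC]; exact dot3_comb_s11 _ _ (hTT s) (hNN s) (hTN s) _ _ _ _ _ _
  have hFFv : FF = (Real.cos u + r' s * Real.sin u)*(r s * Real.cos u) + (Real.sin u + r' s * (1 - Real.cos u))*(r s * Real.sin u) + (r s * τ s * (1 - Real.cos u))*0 := by
    rw [hF, hXsC, hXuC]; exact dot3_comb_s11 _ _ (hTT s) (hNN s) (hTN s) _ _ _ _ _ _
  have hGGv : GG = (r s * Real.cos u)*(r s * Real.cos u) + (r s * Real.sin u)*(r s * Real.sin u) + 0*0 := by
    rw [hG, hXuC]; exact dot3_comb_s11 _ _ (hTT s) (hNN s) (hTN s) _ _ _ _ _ _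
  -- norm of the cross product
  have hsq2 : (Real.sqrt ((r s)^2*(τ s)^2 + (r' s)^2)) ^ 2 = (r s)^2*(τ s)^2 + (r' s)^2 := Real.sq_sqrt hQpos.le
  have hnorm : norm3 (cross3 (Xs s u) (Xu s u))
      = r s * (1 - Real.cos u) * Real.sqrt ((r s)^2*(τ s)^2 + (r' s)^2) := by
    have h1 : dot3 (cross3 (Xs s u) (Xu s u)) (cross3 (Xs s u) (Xu s u))
        = (r s * (1 - Real.cos u) * Real.sqrt ((r s)^2*(τ s)^2 + (r' s)^2))^2 := by
      rw [lagrange3, hXsC, hXuC,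
        dot3_comb_s11 _ _ (hTT s) (hNN s) (hTN s),
        dot3_comb_s11 _ _ (hTT s) (hNN s) (hTN s),
        dot3_comb_s11 _ _ (hTT s) (hNN s) (hTN s)]
      linear_combination (r s ^ 4 * τ s ^ 2 * Real.cos u ^ 2 - 2 * r s ^ 4 * τ s ^ 2 * Real.cos u + r s ^ 4 * τ s ^ 2 + r s ^ 2 * r' s ^ 2 * Real.sin u ^ 2 + r s ^ 2 * r' s ^ 2 * Real.cos u ^ 2 - 2 * r s ^ 2 * r' s ^ 2 * Real.cos u + r s ^ 2 * r' s ^ 2) * (Real.sin_sq_add_cos_sq u)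
        - ((r s)^2*(1 - Real.cos u)^2) * hsq2
    rw [norm3, h1]
    exact Real.sqrt_sq (mul_nonneg (mul_nonneg hRpos.le (by linarith)) (Real.sqrt_nonneg _))
  -- second fundamental form values
  have heev : ee = ((r'' s * Real.sin u - (Real.sin u + r' s * (1 - Real.cos u)) * κ s)*((Real.sin u + r' s * (1 - Real.cos u))*0 - (r s * τ s * (1 - Real.cos u))*(r s * Real.sin u)) - ((Real.cos u + r' s * Real.sin u) * κ s + r'' s * (1 - Real.cos u) - r s * τ s * (1 - Real.cos u) * τ s)*((Real.cos u + r' s * Real.sin u)*0 - (r s * τ s * (1 - Real.cos u))*(r s * Real.cos u)) + ((Real.sin u + r' s * (1 - Real.cos u)) * τ s + (r' s * τ s + r s * τ' s) * (1 - Real.cos u))*((Real.cos u + r' s * Real.sin u)*(r s * Real.sin u) - (Real.sin u + r' s * (1 - Real.cos u))*(r s * Real.cos u))) / (r s * (1 - Real.cos u) * Real.sqrt ((r s)^2*(τ s)^2 + (r' s)^2)) := by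
    rw [he, h𝒩, dot3_smul_right, hnorm,
      show dot3 (Xss s u) (cross3 (Xs s u) (Xu s u))
        = det3 (Xss s u) (Xs s u) (Xu s u) from rfl,
      hXssC, hXsC, hXuC, det3_comb _ _ (hTT s) (hNN s) (hTN s), inv_mul_eq_div]
  have hffv : ff = ((-Real.sin u + r' s * Real.cos u)*((Real.sin u + r' s * (1 - Real.cos u))*0 - (r s * τ s * (1 - Real.cos u))*(r s * Real.sin u)) - (Real.cos u + r' s * Real.sin u)*((Real.cos u + r' s * Real.sin u)*0 - (r s * τ s * (1 - Real.cos u))*(r s * Real.cos u)) + (r s * τ s * Real.sin u)*((Real.cos u + r' s * Real.sin u)*(r s * Real.sin u) - (Real.sin u + r' s * (1 - Real.cos u))*(r s * Real.cos u))) / (r s * (1 - Real.cos u) * Real.sqrt ((r s)^2*(τ s)^2 + (r' s)^2)) := by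
    rw [hf, h𝒩, dot3_smul_right, hnorm,
      show dot3 (Xsu s u) (cross3 (Xs s u) (Xu s u))
        = det3 (Xsu s u) (Xs s u) (Xu s u) from rfl,
      hXsuC, hXsC, hXuC, det3_comb _ _ (hTT s) (hNN s) (hTN s), inv_mul_eq_div]
  have hggv : gg = ((-(r s * Real.sin u))*((Real.sin u + r' s * (1 - Real.cos u))*0 - (r s * τ s * (1 - Real.cos u))*(r s * Real.sin u)) - (r s * Real.cos u)*((Real.cos u + r' s * Real.sin u)*0 - (r s * τ s * (1 - Real.cos u))*(r s * Real.cos u)) + 0*((Real.cos u + r' s * Real.sin u)*(r s * Real.sin u) - (Real.sin u + r' s * (1 - Real.cos u))*(r s * Real.cos u))) / (r s * (1 - Real.cos u) * Real.sqrt ((r s)^2*(τ s)^2 + (r' s)^2)) := by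
    rw [hg, h𝒩, dot3_smul_right, hnorm,
      show dot3 (Xuu s u) (cross3 (Xs s u) (Xu s u))
        = det3 (Xuu s u) (Xs s u) (Xu s u) from rfl,
      hXuuC, hXsC, hXuC, det3_comb _ _ (hTT s) (hNN s) (hTN s), inv_mul_eq_div]
  exact key (r s) (κ s) (r' s) (r'' s) (τ s) (τ' s) (Real.sin u) (Real.cos u)
    EE FF GG ee ff gg (Real.sin_sq_add_cos_sq u) (hKrel s) hRpos hCtop hQpos
    hEEv hFFv hGGv heev hffv hggv
end
end

section
/- For the surface of osculating circles, H² - K = r²(r''τ - r'τ' + rτ³)²/(4(1 - cos u)²(r²τ² + r'²)³). Consequently, a regular point X(s,u) is umbilical if and only if r''(s)τ(s) - r'(s)τ'(s) + r(s)τ(s)³ = 0. -/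
open Real

noncomputable section

/-- `H² - K` for the surface of osculating circles, and the
characterization of umbilical points. -/
theorem stmt_12
    (α T N B : ℝ → Fin 3 → ℝ) (κ τ r r' : ℝ → ℝ)
    (hκ : ∀ s, 0 < κ s)
    (hr : ∀ s, r s = (κ s)⁻¹)
    -- Frenet frame and Frenet equations
    (hTT : ∀ s, dot3 (T s) (T s) = 1)
    (hNN : ∀ s, dot3 (N s) (N s) = 1)
    (hTN : ∀ s, dot3 (T s) (N s) = 0)
    (hB : ∀ s, B s = cross3 (T s) (N s))
    (hα : ∀ s, HasDerivAt α (T s) s)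
    (hT : ∀ s, HasDerivAt T (κ s • N s) s)
    (hN : ∀ s, HasDerivAt N ((-κ s) • T s + τ s • B s) s)
    (hB' : ∀ s, HasDerivAt B ((-τ s) • N s) s)
    (hr' : ∀ s, HasDerivAt r (r' s) s)
    -- the surface of osculating circles and its partial derivatives
    (X Xs Xu : ℝ → ℝ → Fin 3 → ℝ)
    (hX : ∀ s u, X s u = α s + r s • (Real.sin u • T s + (1 - Real.cos u) • N s))
    (hXs : ∀ s u, HasDerivAt (fun t => X t u) (Xs s u) s)
    (hXu : ∀ s u, HasDerivAt (fun w => X s w) (Xu s u) u)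
    (τ' r'' : ℝ → ℝ)
    (hτ' : ∀ s, HasDerivAt τ (τ' s) s)
    (hr'' : ∀ s, HasDerivAt r' (r'' s) s)
    (K H : ℝ → ℝ → ℝ)
    (hK : ∀ s u, Real.cos u ≠ 1 → K s u =
      τ s * ((r s) ^ 2 * (τ s) ^ 3 * Real.cos u
          + (r' s) ^ 2 * τ s * (Real.cos u - 1)
          + r s * (τ s * r'' s - r' s * τ' s))
        / ((Real.cos u - 1) * ((r s) ^ 2 * (τ s) ^ 2 + (r' s) ^ 2) ^ 2))
    (hH : ∀ s u, Real.cos u ≠ 1 → H s u =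
      -(((r s) ^ 2 * (τ s) ^ 3 * (2 * Real.cos u - 1)
          + 2 * (r' s) ^ 2 * τ s * (Real.cos u - 1)
          + r s * (τ s * r'' s - r' s * τ' s))
        / (2 * (1 - Real.cos u)
            * Real.sqrt (((r s) ^ 2 * (τ s) ^ 2 + (r' s) ^ 2) ^ 3))))
    :
    ∀ s u, Real.cos u ≠ 1 → ¬(r' s = 0 ∧ τ s = 0) →
      (H s u) ^ 2 - K s u =
        (r s) ^ 2 * (r'' s * τ s - r' s * τ' s + r s * (τ s) ^ 3) ^ 2
          / (4 * (1 - Real.cos u) ^ 2 * ((r s) ^ 2 * (τ s) ^ 2 + (r' s) ^ 2) ^ 3)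
      ∧ ((H s u) ^ 2 - K s u = 0 ↔
          r'' s * τ s - r' s * τ' s + r s * (τ s) ^ 3 = 0) := by
  intro s u hc hne
  have hrpos : 0 < r s := by rw [hr s]; exact inv_pos.mpr (hκ s)
  have hQ : 0 < (r s) ^ 2 * (τ s) ^ 2 + (r' s) ^ 2 := by
    rcases not_and_or.mp hne with h | h
    · have h1 : 0 < (r' s) ^ 2 := by positivity
      nlinarith [sq_nonneg (r s * τ s)]
    · have h1 : 0 < (r s) ^ 2 * (τ s) ^ 2 := by positivity
      nlinarith [sq_nonneg (r' s)]
  set Q := (r s) ^ 2 * (τ s) ^ 2 + (r' s) ^ 2 with hQdef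
  have hS : Real.sqrt (Q ^ 3) ^ 2 = Q ^ 3 := Real.sq_sqrt (by positivity)
  have hSpos : 0 < Real.sqrt (Q ^ 3) := Real.sqrt_pos.mpr (by positivity)
  have hc1 : Real.cos u - 1 ≠ 0 := sub_ne_zero.mpr hc
  have hc2 : 1 - Real.cos u ≠ 0 := sub_ne_zero.mpr (Ne.symm hc)
  have hmain : (H s u) ^ 2 - K s u =
      (r s) ^ 2 * (r'' s * τ s - r' s * τ' s + r s * (τ s) ^ 3) ^ 2
        / (4 * (1 - Real.cos u) ^ 2 * Q ^ 3) := by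
    have hA2 : (H s u) ^ 2 =
        ((r s) ^ 2 * (τ s) ^ 3 * (2 * Real.cos u - 1)
          + 2 * (r' s) ^ 2 * τ s * (Real.cos u - 1)
          + r s * (τ s * r'' s - r' s * τ' s)) ^ 2
        / (4 * (1 - Real.cos u) ^ 2 * Q ^ 3) := by
      rw [hH s u hc, ← hQdef, neg_sq, div_pow, mul_pow, mul_pow, hS]
      ring
    rw [hA2, hK s u hc, ← hQdef]
    field_simp
    ring
  refine ⟨hmain, ?_⟩
  rw [hmain]
  have hden : 4 * (1 - Real.cos u) ^ 2 * Q ^ 3 ≠ 0 := by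
    have h1 : (1 - Real.cos u) ^ 2 ≠ 0 := pow_ne_zero _ hc2
    have h2 : Q ^ 3 ≠ 0 := by positivity
    positivity
  rw [div_eq_zero_iff]
  constructor
  · intro h
    rcases h with h | h
    · have h3 : (r'' s * τ s - r' s * τ' s + r s * (τ s) ^ 3) ^ 2 = 0 := by
        have hr2 : (r s) ^ 2 ≠ 0 := by positivity
        exact (mul_eq_zero.mp h).resolve_left hr2
      exact pow_eq_zero_iff (by norm_num) |>.mp h3
    · exact absurd h hden
  · intro h
    left
    rw [h]
    ring
end
end

section
/- If the generator of a surface of osculating circles has constant curvature κ = 1/r (a Salkowski curve), then at regular points the mean and Gaussian curvatures are H = -(2cos u - 1)/(2r(1 - cos u)) and K = -cos u/(r²(1 - cos u)), and they satisfy the linear Weingarten relation H - (r/2)K - 1/(2r) = 0. Moreover with a = 1, b = -r/2, c = -1/(2r) one has a² - 4bc = 0, i.e., the relation is parabolic. -/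
open Real

noncomputable section

/-- If the generator has constant curvature (`r' ≡ 0`, a Salkowski
curve) and positive torsion, then `H` and `K` take the stated forms and satisfy the
parabolic linear Weingarten relation `H - (r/2)K - 1/(2r) = 0`. -/
theorem stmt_15
    (α T N B : ℝ → Fin 3 → ℝ) (κ τ r r' : ℝ → ℝ)
    (hκ : ∀ s, 0 < κ s)
    (hr : ∀ s, r s = (κ s)⁻¹)
    -- Frenet frame and Frenet equations
    (hTT : ∀ s, dot3 (T s) (T s) = 1)
    (hNN : ∀ s, dot3 (N s) (N s) = 1)
    (hTN : ∀ s, dot3 (T s) (N s) = 0)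
    (hB : ∀ s, B s = cross3 (T s) (N s))
    (hα : ∀ s, HasDerivAt α (T s) s)
    (hT : ∀ s, HasDerivAt T (κ s • N s) s)
    (hN : ∀ s, HasDerivAt N ((-κ s) • T s + τ s • B s) s)
    (hB' : ∀ s, HasDerivAt B ((-τ s) • N s) s)
    (hr' : ∀ s, HasDerivAt r (r' s) s)
    -- the surface of osculating circles and its partial derivatives
    (X Xs Xu : ℝ → ℝ → Fin 3 → ℝ)
    (hX : ∀ s u, X s u = α s + r s • (Real.sin u • T s + (1 - Real.cos u) • N s))
    (hXs : ∀ s u, HasDerivAt (fun t => X t u) (Xs s u) s)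
    (hXu : ∀ s u, HasDerivAt (fun w => X s w) (Xu s u) u)
    (τ' r'' : ℝ → ℝ)
    (hτ' : ∀ s, HasDerivAt τ (τ' s) s)
    (hr'' : ∀ s, HasDerivAt r' (r'' s) s)
    (K H : ℝ → ℝ → ℝ)
    (hK : ∀ s u, Real.cos u ≠ 1 → K s u =
      τ s * ((r s) ^ 2 * (τ s) ^ 3 * Real.cos u
          + (r' s) ^ 2 * τ s * (Real.cos u - 1)
          + r s * (τ s * r'' s - r' s * τ' s))
        / ((Real.cos u - 1) * ((r s) ^ 2 * (τ s) ^ 2 + (r' s) ^ 2) ^ 2))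
    (hH : ∀ s u, Real.cos u ≠ 1 → H s u =
      -(((r s) ^ 2 * (τ s) ^ 3 * (2 * Real.cos u - 1)
          + 2 * (r' s) ^ 2 * τ s * (Real.cos u - 1)
          + r s * (τ s * r'' s - r' s * τ' s))
        / (2 * (1 - Real.cos u)
            * Real.sqrt (((r s) ^ 2 * (τ s) ^ 2 + (r' s) ^ 2) ^ 3))))
    (hr'0 : ∀ s, r' s = 0)
    (hτpos : ∀ s, 0 < τ s) :
    ∀ s u, Real.cos u ≠ 1 →
      H s u = -((2 * Real.cos u - 1) / (2 * r s * (1 - Real.cos u)))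
      ∧ K s u = -(Real.cos u / ((r s) ^ 2 * (1 - Real.cos u)))
      ∧ H s u - (r s / 2) * K s u - 1 / (2 * r s) = 0
      ∧ (1 : ℝ) ^ 2 - 4 * (-(r s / 2)) * (-(1 / (2 * r s))) = 0 := by

  intro s u hcu
  have hrpos : 0 < r s := by rw [hr]; exact inv_pos.mpr (hκ s)
  have hτ : 0 < τ s := hτpos s
  have hc1 : Real.cos u - 1 ≠ 0 := sub_ne_zero.mpr hcu
  have hc2 : 1 - Real.cos u ≠ 0 := sub_ne_zero.mpr (Ne.symm hcu)
  have hr''0 : r'' s = 0 := by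
    have h0 : HasDerivAt r' 0 s := by
      have he : r' = fun _ => (0 : ℝ) := funext hr'0
      rw [he]; exact hasDerivAt_const s 0
    exact (hr'' s).unique h0
  have hK' := hK s u hcu
  have hH' := hH s u hcu
  rw [hr'0, hr''0] at hK' hH'
  have hsq : Real.sqrt (((r s) ^ 2 * (τ s) ^ 2 + (0:ℝ) ^ 2) ^ 3)
      = (r s) ^ 3 * (τ s) ^ 3 := by
    have : ((r s) ^ 2 * (τ s) ^ 2 + (0:ℝ) ^ 2) ^ 3 = ((r s) ^ 3 * (τ s) ^ 3) ^ 2 := by ring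
    rw [this, Real.sqrt_sq (by positivity)]
  rw [hsq] at hH'
  have hKval : K s u = -(Real.cos u / ((r s) ^ 2 * (1 - Real.cos u))) := by
    rw [hK']; field_simp; ring
  have hHval : H s u = -((2 * Real.cos u - 1) / (2 * r s * (1 - Real.cos u))) := by
    rw [hH']; field_simp; ring
  refine ⟨hHval, hKval, ?_, ?_⟩
  · rw [hHval, hKval]; field_simp; ring
  · field_simp; ring
end
end

section
/- Suppose the surface of osculating circles of a unit-speed curve α has constant Gaussian curvature K = c at all regular points. If c = 0 then τ ≡ 0 (so the surface lies in a plane). If c ≠ 0 then the generator satisfies r''τ - r'τ' + rτ³ = 0 with τ ≠ 0 and r' not identically zero (so the surface lies in a sphere). -/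
open Real

noncomputable section

/-- If the surface of osculating circles has constant Gaussian
curvature `c` at all regular points, then `c = 0` forces `τ ≡ 0` (planar case), and
`c ≠ 0` forces the spherical condition `r''τ - r'τ' + rτ³ = 0` with `τ`
nowhere zero and `r'` not identically zero. -/
theorem stmt_17
    (α T N B : ℝ → Fin 3 → ℝ) (κ τ r r' : ℝ → ℝ)
    (hκ : ∀ s, 0 < κ s)
    (hr : ∀ s, r s = (κ s)⁻¹)
    -- Frenet frame and Frenet equations
    (hTT : ∀ s, dot3 (T s) (T s) = 1)
    (hNN : ∀ s, dot3 (N s) (N s) = 1)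
    (hTN : ∀ s, dot3 (T s) (N s) = 0)
    (hB : ∀ s, B s = cross3 (T s) (N s))
    (hα : ∀ s, HasDerivAt α (T s) s)
    (hT : ∀ s, HasDerivAt T (κ s • N s) s)
    (hN : ∀ s, HasDerivAt N ((-κ s) • T s + τ s • B s) s)
    (hB' : ∀ s, HasDerivAt B ((-τ s) • N s) s)
    (hr' : ∀ s, HasDerivAt r (r' s) s)
    -- the surface of osculating circles and its partial derivatives
    (X Xs Xu : ℝ → ℝ → Fin 3 → ℝ)
    (hX : ∀ s u, X s u = α s + r s • (Real.sin u • T s + (1 - Real.cos u) • N s))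
    (hXs : ∀ s u, HasDerivAt (fun t => X t u) (Xs s u) s)
    (hXu : ∀ s u, HasDerivAt (fun w => X s w) (Xu s u) u)
    (τ' r'' : ℝ → ℝ)
    (hτ' : ∀ s, HasDerivAt τ (τ' s) s)
    (hr'' : ∀ s, HasDerivAt r' (r'' s) s)
    (K : ℝ → ℝ → ℝ)
    (hK : ∀ s u, Real.cos u ≠ 1 → K s u =
      τ s * ((r s) ^ 2 * (τ s) ^ 3 * Real.cos u
          + (r' s) ^ 2 * τ s * (Real.cos u - 1)
          + r s * (τ s * r'' s - r' s * τ' s))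
        / ((Real.cos u - 1) * ((r s) ^ 2 * (τ s) ^ 2 + (r' s) ^ 2) ^ 2))
    (hreg : ∀ s, ¬(r' s = 0 ∧ τ s = 0))
    (c : ℝ)
    (hconst : ∀ s u, Real.cos u ≠ 1 → K s u = c) :
    (c = 0 → ∀ s, τ s = 0)
    ∧ (c ≠ 0 →
        (∀ s, r'' s * τ s - r' s * τ' s + r s * (τ s) ^ 3 = 0)
        ∧ (∀ s, τ s ≠ 0)
        ∧ ¬(∀ s, r' s = 0)) := by
  have hrpos : ∀ s, 0 < r s := fun s => by rw [hr s]; exact inv_pos.2 (hκ s)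
  have hD : ∀ s, (r s) ^ 2 * (τ s) ^ 2 + (r' s) ^ 2 ≠ 0 := by
    intro s h0
    have hr'0 : r' s = 0 := by nlinarith [sq_nonneg (r s * τ s), sq_nonneg (r' s)]
    have hτ0 : τ s = 0 := by
      have hrp := hrpos s
      have h1 : (r s * τ s) ^ 2 = 0 := by rw [hr'0] at h0; nlinarith
      rcases mul_eq_zero.1 ((pow_eq_zero_iff two_ne_zero).1 h1) with h | h
      · exact absurd h (ne_of_gt hrp)
      · exact h
    exact hreg s ⟨hr'0, hτ0⟩
  have key : ∀ s,
      τ s * ((r s) ^ 2 * (τ s) ^ 3 + r s * (τ s * r'' s - r' s * τ' s)) = 0 ∧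
      (τ s) ^ 2 * ((r s) ^ 2 * (τ s) ^ 2 + (r' s) ^ 2)
        = c * ((r s) ^ 2 * (τ s) ^ 2 + (r' s) ^ 2) ^ 2 := by
    intro s
    have get : ∀ u : ℝ, Real.cos u ≠ 1 →
        τ s * ((r s) ^ 2 * (τ s) ^ 3 * Real.cos u
            + (r' s) ^ 2 * τ s * (Real.cos u - 1)
            + r s * (τ s * r'' s - r' s * τ' s))
          = c * ((Real.cos u - 1) * ((r s) ^ 2 * (τ s) ^ 2 + (r' s) ^ 2) ^ 2) := by
      intro u hu
      have h1 := (hK s u hu).symm.trans (hconst s u hu)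
      have hden : (Real.cos u - 1) * ((r s) ^ 2 * (τ s) ^ 2 + (r' s) ^ 2) ^ 2 ≠ 0 :=
        mul_ne_zero (sub_ne_zero.2 hu) (pow_ne_zero 2 (hD s))
      rwa [div_eq_iff hden] at h1
    have hπ := get π (by rw [Real.cos_pi]; norm_num)
    have h2 := get (π / 2) (by rw [Real.cos_pi_div_two]; norm_num)
    rw [Real.cos_pi] at hπ
    rw [Real.cos_pi_div_two] at h2
    exact ⟨by linear_combination 2 * h2 - hπ, by linear_combination h2 - hπ⟩
  have sph : c ≠ 0 → ∀ s, τ s ≠ 0 := by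
    intro hc s hτ0
    obtain ⟨_, h2⟩ := key s
    have hr'ne : r' s ≠ 0 := fun h => hreg s ⟨h, hτ0⟩
    rw [hτ0] at h2
    have hcz : c * ((r s) ^ 2 * (0 : ℝ) ^ 2 + (r' s) ^ 2) ^ 2 = 0 := by
      linear_combination -h2
    rcases mul_eq_zero.1 hcz with h | h
    · exact hc h
    · have h' := pow_eq_zero_iff two_ne_zero |>.1 h
      have : (r' s) ^ 2 = 0 := by nlinarith
      exact hr'ne (pow_eq_zero_iff two_ne_zero |>.1 this)
  refine ⟨?_, ?_⟩
  · intro hc s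
    obtain ⟨_, h2⟩ := key s
    rw [hc] at h2
    have hτ2 : (τ s) ^ 2 = 0 := by
      rcases mul_eq_zero.1 (by linarith : (τ s) ^ 2 * ((r s) ^ 2 * (τ s) ^ 2 + (r' s) ^ 2) = 0) with h | h
      · exact h
      · exact absurd h (hD s)
    exact (pow_eq_zero_iff two_ne_zero).1 hτ2
  · intro hc
    have hτne := sph hc
    have hsph : ∀ s, r'' s * τ s - r' s * τ' s + r s * (τ s) ^ 3 = 0 := by
      intro s
      obtain ⟨h1, _⟩ := key s
      have hfac : τ s * r s * (r'' s * τ s - r' s * τ' s + r s * (τ s) ^ 3) = 0 := by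
        linear_combination h1
      exact (mul_eq_zero.1 hfac).resolve_left
        (mul_ne_zero (hτne s) (ne_of_gt (hrpos s)))
    refine ⟨hsph, hτne, ?_⟩
    intro hall
    have h0 : r' = fun _ => (0 : ℝ) := funext hall
    have hr''0 : r'' 0 = 0 := by
      have h := hr'' 0
      rw [h0] at h
      exact h.unique (hasDerivAt_const 0 0)
    have := hsph 0
    rw [hr''0, hall 0] at this
    have : r 0 * (τ 0) ^ 3 = 0 := by linarith
    rcases mul_eq_zero.1 this with h | h
    · exact absurd h (ne_of_gt (hrpos 0))
    · exact hτne 0 ((pow_eq_zero_iff three_ne_zero).1 h)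
end
end

section
/- Suppose the surface of osculating circles of a unit-speed curve α has constant mean curvature H = c at all regular points. If c = 0 then τ ≡ 0 (so the surface lies in a plane). If c ≠ 0 then τ = c√(r²τ² + r'²) and r''τ - r'τ' + rτ³ = 0 (so the generator is spherical and the surface lies in a sphere). -/
open Real

noncomputable section

/-- If the surface of osculating circles has constant mean curvature
`c` at all regular points, then `c = 0` forces `τ ≡ 0` (planar case), while `c ≠ 0`
forces `τ = c√(r²τ² + r'²)` together with the spherical condition
`r''τ - r'τ' + rτ³ = 0`. -/
theorem stmt_18
    (α T N B : ℝ → Fin 3 → ℝ) (κ τ r r' : ℝ → ℝ)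
    (hκ : ∀ s, 0 < κ s)
    (hr : ∀ s, r s = (κ s)⁻¹)
    -- Frenet frame and Frenet equations
    (hTT : ∀ s, dot3 (T s) (T s) = 1)
    (hNN : ∀ s, dot3 (N s) (N s) = 1)
    (hTN : ∀ s, dot3 (T s) (N s) = 0)
    (hB : ∀ s, B s = cross3 (T s) (N s))
    (hα : ∀ s, HasDerivAt α (T s) s)
    (hT : ∀ s, HasDerivAt T (κ s • N s) s)
    (hN : ∀ s, HasDerivAt N ((-κ s) • T s + τ s • B s) s)
    (hB' : ∀ s, HasDerivAt B ((-τ s) • N s) s)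
    (hr' : ∀ s, HasDerivAt r (r' s) s)
    -- the surface of osculating circles and its partial derivatives
    (X Xs Xu : ℝ → ℝ → Fin 3 → ℝ)
    (hX : ∀ s u, X s u = α s + r s • (Real.sin u • T s + (1 - Real.cos u) • N s))
    (hXs : ∀ s u, HasDerivAt (fun t => X t u) (Xs s u) s)
    (hXu : ∀ s u, HasDerivAt (fun w => X s w) (Xu s u) u)
    (τ' r'' : ℝ → ℝ)
    (hτ' : ∀ s, HasDerivAt τ (τ' s) s)
    (hr'' : ∀ s, HasDerivAt r' (r'' s) s)
    (H : ℝ → ℝ → ℝ)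
    (hH : ∀ s u, Real.cos u ≠ 1 → H s u =
      -(((r s) ^ 2 * (τ s) ^ 3 * (2 * Real.cos u - 1)
          + 2 * (r' s) ^ 2 * τ s * (Real.cos u - 1)
          + r s * (τ s * r'' s - r' s * τ' s))
        / (2 * (1 - Real.cos u)
            * Real.sqrt (((r s) ^ 2 * (τ s) ^ 2 + (r' s) ^ 2) ^ 3))))
    (hreg : ∀ s, ¬(r' s = 0 ∧ τ s = 0))
    (c : ℝ)
    (hconst : ∀ s u, Real.cos u ≠ 1 → H s u = c) :
    (c = 0 → ∀ s, τ s = 0)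
    ∧ (c ≠ 0 →
        (∀ s, τ s = c * Real.sqrt ((r s) ^ 2 * (τ s) ^ 2 + (r' s) ^ 2))
        ∧ (∀ s, r'' s * τ s - r' s * τ' s + r s * (τ s) ^ 3 = 0)) := by
  have key : ∀ s, τ s * ((r s) ^ 2 * (τ s) ^ 2 + (r' s) ^ 2) =
      c * Real.sqrt (((r s) ^ 2 * (τ s) ^ 2 + (r' s) ^ 2) ^ 3) ∧
      r'' s * τ s - r' s * τ' s + r s * (τ s) ^ 3 = 0 := by
    intro s
    have hrpos : 0 < r s := by rw [hr]; exact inv_pos.mpr (hκ s)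
    have hP : 0 < (r s) ^ 2 * (τ s) ^ 2 + (r' s) ^ 2 := by
      rcases not_and_or.mp (hreg s) with h | h
      · have h2 : 0 < (r' s) ^ 2 := by positivity
        nlinarith [sq_nonneg (r s * τ s)]
      · have h2 : 0 < (τ s) ^ 2 := by positivity
        nlinarith [sq_nonneg (r' s), mul_pos (pow_pos hrpos 2) h2]
    set Q := Real.sqrt (((r s) ^ 2 * (τ s) ^ 2 + (r' s) ^ 2) ^ 3) with hQdef
    have hQ : 0 < Q := Real.sqrt_pos.mpr (by positivity)
    have hc1 : Real.cos (Real.pi / 2) ≠ 1 := by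
      rw [Real.cos_pi_div_two]; norm_num
    have hc2 : Real.cos Real.pi ≠ 1 := by
      rw [Real.cos_pi]; norm_num
    have e1 : c = -(((r s) ^ 2 * (τ s) ^ 3 * (2 * 0 - 1)
          + 2 * (r' s) ^ 2 * τ s * (0 - 1)
          + r s * (τ s * r'' s - r' s * τ' s)) / (2 * (1 - 0) * Q)) := by
      have := (hconst s (Real.pi / 2) hc1).symm.trans (hH s (Real.pi / 2) hc1)
      rwa [Real.cos_pi_div_two] at this
    have e2 : c = -(((r s) ^ 2 * (τ s) ^ 3 * (2 * (-1) - 1)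
          + 2 * (r' s) ^ 2 * τ s * ((-1) - 1)
          + r s * (τ s * r'' s - r' s * τ' s)) / (2 * (1 - (-1)) * Q)) := by
      have := (hconst s Real.pi hc2).symm.trans (hH s Real.pi hc2)
      rwa [Real.cos_pi] at this
    have hQ0 : Q ≠ 0 := hQ.ne'
    field_simp at e1 e2
    constructor
    · nlinarith [e1, e2]
    · have h2 : r s * (r'' s * τ s - r' s * τ' s + r s * (τ s) ^ 3) = 0 := by
        nlinarith [e1, e2]
      have := mul_eq_zero.mp h2
      rcases this with h | h
      · exact absurd h hrpos.ne'
      · exact h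
  refine ⟨fun hc s => ?_, fun hc => ⟨fun s => ?_, fun s => (key s).2⟩⟩
  · have h1 := (key s).1
    rw [hc, zero_mul] at h1
    have hP : 0 < (r s) ^ 2 * (τ s) ^ 2 + (r' s) ^ 2 := by
      rcases not_and_or.mp (hreg s) with h | h
      · have h2 : 0 < (r' s) ^ 2 := by positivity
        nlinarith [sq_nonneg (r s * τ s)]
      · have hrpos : 0 < r s := by rw [hr]; exact inv_pos.mpr (hκ s)
        have h2 : 0 < (τ s) ^ 2 := by positivity
        nlinarith [sq_nonneg (r' s), mul_pos (pow_pos hrpos 2) h2]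
    exact (mul_eq_zero.mp h1).resolve_right hP.ne'
  · have h1 := (key s).1
    have hP : 0 < (r s) ^ 2 * (τ s) ^ 2 + (r' s) ^ 2 := by
      rcases not_and_or.mp (hreg s) with h | h
      · have h2 : 0 < (r' s) ^ 2 := by positivity
        nlinarith [sq_nonneg (r s * τ s)]
      · have hrpos : 0 < r s := by rw [hr]; exact inv_pos.mpr (hκ s)
        have h2 : 0 < (τ s) ^ 2 := by positivity
        nlinarith [sq_nonneg (r' s), mul_pos (pow_pos hrpos 2) h2]
    have hs : Real.sqrt (((r s) ^ 2 * (τ s) ^ 2 + (r' s) ^ 2) ^ 3)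
        = ((r s) ^ 2 * (τ s) ^ 2 + (r' s) ^ 2)
          * Real.sqrt ((r s) ^ 2 * (τ s) ^ 2 + (r' s) ^ 2) := by
      rw [pow_succ, Real.sqrt_mul (by positivity), Real.sqrt_sq hP.le]
    rw [hs] at h1
    have : τ s * ((r s) ^ 2 * (τ s) ^ 2 + (r' s) ^ 2)
        = (c * Real.sqrt ((r s) ^ 2 * (τ s) ^ 2 + (r' s) ^ 2))
          * ((r s) ^ 2 * (τ s) ^ 2 + (r' s) ^ 2) := by
      rw [h1]; ring
    exact mul_right_cancel₀ hP.ne' this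
end
end
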